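/- arXiv:2311.15283 — 5 statements merged into one kernel-verified Lean document; each statement's English description precedes it below -/
import Mathlib

section
/- Fix x ∈ ℝ^d, g ∈ ℝ, K ≥ 1, θ₀ ∈ ℝ, and let f : ℝ^d × ℝ → ℝ, (y,θ) ↦ f(y;θ). Assume: (i) for every θ in a neighborhood U of θ₀, δ ↦ f(x+δ;θ) is integrable with respect to γ; (ii) for γ-a.e. δ, θ ↦ f(x+δ;θ) is differentiable on U; (iii) there is h : ℝ^d → ℝ integrable with respect to γ such that |∂_θ f(x+δ;θ)| ≤ h(δ) for all θ ∈ U and γ-a.e. δ. Let δ_1,…,δ_K, δ'_1,…,δ'_K be 2K mutually independent γ-distributed samples and L⁽¹⁾(θ) := ((1/K)∑_i f(x+δ'_i;θ) − g)·((1/K)∑_i f(x+δ_i;θ) − g), and let L_b(θ) := (E_{δ∼γ}[f(x+δ;θ)] − g)². Then E[∂_θ L⁽¹⁾(θ₀)] = ∂_θ L_b(θ₀). -/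
open MeasureTheory ProbabilityTheory Real

section Helpers


lemma pi_eval_single {ι X : Type*} [Fintype ι] [MeasurableSpace X]
    (ν : Measure X) [IsProbabilityMeasure ν] {u : X → ℝ} (hu : Integrable u ν) (a : ι) :
    Integrable (fun D : ι → X => u (D a)) (Measure.pi fun _ => ν) ∧
      ∫ D : ι → X, u (D a) ∂(Measure.pi fun _ => ν) = ∫ y, u y ∂ν := by
  classical
  letI : MeasureSpace X := { volume := ν }
  haveI : SigmaFinite (volume : Measure X) := by
    show SigmaFinite ν; infer_instance
  set G : ι → X → ℝ := fun k => if k = a then u else fun _ => 1 with hG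
  have hg : ∀ k, Integrable (G k) ν := by
    intro k; simp only [hG]; split_ifs
    · exact hu
    · exact integrable_const 1
  have key : ∀ D : ι → X, (∏ k, G k (D k)) = u (D a) := by
    intro D
    rw [Finset.prod_eq_single a (fun k _ hk => by simp [hG, hk]) (by simp)]
    simp [hG]
  have h1 : Integrable (fun D : ι → X => ∏ k, G k (D k)) (Measure.pi fun _ => ν) :=
    Integrable.fintype_prod hg
  have h2 : ∫ D : ι → X, ∏ k, G k (D k) ∂(Measure.pi fun _ => ν) = ∏ k, ∫ y, G k y ∂ν :=
    integral_fintype_prod_eq_prod G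
  constructor
  · exact h1.congr (Filter.Eventually.of_forall key)
  · rw [← integral_congr_ae (Filter.Eventually.of_forall key), h2,
      Finset.prod_eq_single a (fun k _ hk => by simp [hG, hk]) (by simp)]
    simp [hG]

lemma pi_eval_pair {ι X : Type*} [Fintype ι] [MeasurableSpace X]
    (ν : Measure X) [IsProbabilityMeasure ν] {u v : X → ℝ} (hu : Integrable u ν)
    (hv : Integrable v ν) {a b : ι} (hab : a ≠ b) :
    Integrable (fun D : ι → X => u (D a) * v (D b)) (Measure.pi fun _ => ν) ∧
      ∫ D : ι → X, u (D a) * v (D b) ∂(Measure.pi fun _ => ν)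
        = (∫ y, u y ∂ν) * ∫ y, v y ∂ν := by
  classical
  letI : MeasureSpace X := { volume := ν }
  haveI : SigmaFinite (volume : Measure X) := by
    show SigmaFinite ν; infer_instance
  set G : ι → X → ℝ := fun k => if k = a then u else if k = b then v else fun _ => 1 with hG
  have hg : ∀ k, Integrable (G k) ν := by
    intro k; simp only [hG]; split_ifs
    · exact hu
    · exact hv
    · exact integrable_const 1
  have huniv : (Finset.univ : Finset ι) = insert a (insert b (Finset.univ \ {a, b})) := by
    ext k
    by_cases h1 : k = a <;> by_cases h2 : k = b <;> simp [h1, h2]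
  have hprodG : ∏ k, ∫ y, G k y ∂ν = (∫ y, u y ∂ν) * ∫ y, v y ∂ν := by
    rw [huniv, Finset.prod_insert (by simp [hab]), Finset.prod_insert (by simp)]
    have : ∏ k ∈ Finset.univ \ {a, b}, ∫ y, G k y ∂ν = 1 := by
      apply Finset.prod_eq_one
      intro k hk
      simp only [Finset.mem_sdiff, Finset.mem_insert, Finset.mem_singleton] at hk
      push_neg at hk
      simp [hG, hk.2.1, hk.2.2]
    rw [this, mul_one]
    simp [hG, hab, Ne.symm hab]
  have key : ∀ D : ι → X, (∏ k, G k (D k)) = u (D a) * v (D b) := by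
    intro D
    rw [huniv, Finset.prod_insert (by simp [hab]), Finset.prod_insert (by simp)]
    have : ∏ k ∈ Finset.univ \ {a, b}, G k (D k) = 1 := by
      apply Finset.prod_eq_one
      intro k hk
      simp only [Finset.mem_sdiff, Finset.mem_insert, Finset.mem_singleton] at hk
      push_neg at hk
      simp [hG, hk.2.1, hk.2.2]
    rw [this, mul_one]
    simp [hG, hab, Ne.symm hab]
  have h1 : Integrable (fun D : ι → X => ∏ k, G k (D k)) (Measure.pi fun _ => ν) :=
    Integrable.fintype_prod hg
  have h2 : ∫ D : ι → X, ∏ k, G k (D k) ∂(Measure.pi fun _ => ν) = ∏ k, ∫ y, G k y ∂ν :=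
    integral_fintype_prod_eq_prod G
  exact ⟨h1.congr (Filter.Eventually.of_forall key),
    by rw [← integral_congr_ae (Filter.Eventually.of_forall key), h2, hprodG]⟩

lemma cross_term {ι X : Type*} [Fintype ι] [MeasurableSpace X]
    (ν : Measure X) [IsProbabilityMeasure ν] {u v : X → ℝ} (hu : Integrable u ν)
    (hv : Integrable v ν) {K : ℕ} (a b : Fin K → ι) (hab : ∀ i j, a i ≠ b j)
    (c g₁ g₂ : ℝ) :
    Integrable (fun D : ι → X =>
        (c * (∑ i, u (D (a i))) - g₁) * (c * (∑ j, v (D (b j))) - g₂))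
      (Measure.pi fun _ => ν) ∧
      ∫ D : ι → X, (c * (∑ i, u (D (a i))) - g₁) * (c * (∑ j, v (D (b j))) - g₂)
          ∂(Measure.pi fun _ => ν)
        = (c * K * ∫ y, u y ∂ν - g₁) * (c * K * ∫ y, v y ∂ν - g₂) := by
  classical
  set μ := (Measure.pi fun _ : ι => ν) with hμ
  have hPint : Integrable (fun D : ι → X => ∑ i, ∑ j, u (D (a i)) * v (D (b j))) μ :=
    integrable_finset_sum _ fun i _ => integrable_finset_sum _ fun j _ =>
      (pi_eval_pair ν hu hv (hab i j)).1
  have hPval : ∫ D : ι → X, ∑ i, ∑ j, u (D (a i)) * v (D (b j)) ∂μ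
      = (K : ℝ) * ((K : ℝ) * ((∫ y, u y ∂ν) * ∫ y, v y ∂ν)) := by
    rw [integral_finset_sum _ (fun i _ => integrable_finset_sum _ fun j _ =>
      (pi_eval_pair ν hu hv (hab i j)).1)]
    have : ∀ i, ∫ D : ι → X, ∑ j, u (D (a i)) * v (D (b j)) ∂μ
        = (K : ℝ) * ((∫ y, u y ∂ν) * ∫ y, v y ∂ν) := by
      intro i
      rw [integral_finset_sum _ (fun j _ => (pi_eval_pair ν hu hv (hab i j)).1),
        Finset.sum_congr rfl (fun j _ => (pi_eval_pair ν hu hv (hab i j)).2)]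
      simp [Finset.sum_const, Finset.card_univ, nsmul_eq_mul]
    rw [Finset.sum_congr rfl fun i _ => this i]
    simp [Finset.sum_const, Finset.card_univ, nsmul_eq_mul]
  have hSint : Integrable (fun D : ι → X => ∑ i, u (D (a i))) μ :=
    integrable_finset_sum _ fun i _ => (pi_eval_single ν hu (a i)).1
  have hSval : ∫ D : ι → X, ∑ i, u (D (a i)) ∂μ = (K : ℝ) * ∫ y, u y ∂ν := by
    rw [integral_finset_sum _ (fun i _ => (pi_eval_single ν hu (a i)).1),
      Finset.sum_congr rfl (fun i _ => (pi_eval_single ν hu (a i)).2)]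
    simp [Finset.sum_const, Finset.card_univ, nsmul_eq_mul]
  have hTint : Integrable (fun D : ι → X => ∑ j, v (D (b j))) μ :=
    integrable_finset_sum _ fun j _ => (pi_eval_single ν hv (b j)).1
  have hTval : ∫ D : ι → X, ∑ j, v (D (b j)) ∂μ = (K : ℝ) * ∫ y, v y ∂ν := by
    rw [integral_finset_sum _ (fun j _ => (pi_eval_single ν hv (b j)).1),
      Finset.sum_congr rfl (fun j _ => (pi_eval_single ν hv (b j)).2)]
    simp [Finset.sum_const, Finset.card_univ, nsmul_eq_mul]
  have key : (fun D : ι → X =>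
      (c * (∑ i, u (D (a i))) - g₁) * (c * (∑ j, v (D (b j))) - g₂))
      = fun D : ι → X =>
        (c * c) * (∑ i, ∑ j, u (D (a i)) * v (D (b j)))
        + ((-(g₂ * c)) * (∑ i, u (D (a i)))
        + ((-(g₁ * c)) * (∑ j, v (D (b j))) + g₁ * g₂)) := by
    funext D
    rw [← Finset.sum_mul_sum]
    ring
  have i3 : Integrable (fun D : ι → X =>
      -(g₁ * c) * (∑ j, v (D (b j))) + g₁ * g₂) μ :=
    (hTint.const_mul _).add (integrable_const _)
  have i2 : Integrable (fun D : ι → X =>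
      -(g₂ * c) * (∑ i, u (D (a i))) + (-(g₁ * c) * (∑ j, v (D (b j))) + g₁ * g₂)) μ :=
    (hSint.const_mul _).add i3
  constructor
  · rw [key]
    exact (hPint.const_mul _).add i2
  · rw [key, integral_add (hPint.const_mul _) i2, integral_add (hSint.const_mul _) i3,
      integral_add (hTint.const_mul _) (integrable_const _),
      integral_const_mul, integral_const_mul, integral_const_mul,
      hPval, hSval, hTval, integral_const]
    simp only [probReal_univ, smul_eq_mul, one_mul]
    ring

end Helpers

/-- The centered Gaussian measure `N(0, σ²·I_d)` on `ℝ^d`, realized as the `d`-fold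
product of the one-dimensional Gaussian `N(0, σ²)`. -/
noncomputable def rsGaussian (d : ℕ) (σ : ℝ) : Measure (Fin d → ℝ) :=
  Measure.pi fun _ : Fin d => gaussianReal 0 (σ.toNNReal ^ 2)

instance (d : ℕ) (σ : ℝ) : IsProbabilityMeasure (rsGaussian d σ) := by
  unfold rsGaussian; infer_instance

/-- under integrability, a.e.-differentiability in the parameter, and a
dominated-derivative condition, the expected θ-gradient of the debiased boundary loss
`L⁽¹⁾` equals the θ-gradient of the exact boundary loss `L_b` at θ₀. -/
theorem unbiased_boundary_loss_gradient
    (d K : ℕ) (hK : 1 ≤ K) (σ : ℝ) (hσ : 0 < σ)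
    (f : (Fin d → ℝ) → ℝ → ℝ) (x : Fin d → ℝ) (g : ℝ) (θ₀ : ℝ)
    (U : Set ℝ) (hU : U ∈ nhds θ₀)
    (hint : ∀ θ ∈ U, Integrable (fun δ => f (x + δ) θ) (rsGaussian d σ))
    (hdiff : ∀ᵐ δ ∂(rsGaussian d σ), DifferentiableOn ℝ (f (x + δ)) U)
    (h : (Fin d → ℝ) → ℝ) (hh : Integrable h (rsGaussian d σ))
    (hbound : ∀ᵐ δ ∂(rsGaussian d σ), ∀ θ ∈ U, |deriv (f (x + δ)) θ| ≤ h δ) :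
    ∫ D : Fin 2 × Fin K → Fin d → ℝ,
        deriv (fun θ =>
          ((K : ℝ)⁻¹ * ∑ i : Fin K, f (x + D (1, i)) θ - g) *
          ((K : ℝ)⁻¹ * ∑ i : Fin K, f (x + D (0, i)) θ - g)) θ₀
      ∂(Measure.pi fun _ : Fin 2 × Fin K => rsGaussian d σ)
    = deriv (fun θ => ((∫ δ, f (x + δ) θ ∂(rsGaussian d σ)) - g) ^ 2) θ₀ := by
  classical
  obtain ⟨ε, hε, hball⟩ : ∃ ε > 0, Metric.ball θ₀ ε ⊆ U := Metric.mem_nhds_iff.mp hU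
  have hθ₀U : θ₀ ∈ U := mem_of_mem_nhds hU
  have hm : ∀ θ ∈ U, AEStronglyMeasurable (fun δ => f (x + δ) θ) (rsGaussian d σ) :=
    fun θ hθ => (hint θ hθ).1
  have hψ_int : Integrable (fun δ => f (x + δ) θ₀) (rsGaussian d σ) := hint θ₀ hθ₀U
  have hUnhds : ∀ θ ∈ Metric.ball θ₀ ε, U ∈ nhds θ := fun θ hθ =>
    Filter.mem_of_superset (Metric.isOpen_ball.mem_nhds hθ) hball
  have hgood : ∀ᵐ δ ∂(rsGaussian d σ), ∀ θ ∈ Metric.ball θ₀ ε,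
      HasDerivAt (f (x + δ)) (deriv (f (x + δ)) θ) θ := by
    filter_upwards [hdiff] with δ hδ θ hθ
    exact (hδ.differentiableAt (hUnhds θ hθ)).hasDerivAt
  -- measurability of the derivative
  have hθmem : ∀ n : ℕ, θ₀ + ε / (n + 2) ∈ Metric.ball θ₀ ε := by
    intro n
    have h2 : (0:ℝ) < (n:ℝ) + 2 := by positivity
    simp only [Metric.mem_ball, Real.dist_eq, add_sub_cancel_left]
    rw [abs_of_pos (by positivity), div_lt_iff₀ h2]
    nlinarith
  have hθne : ∀ n : ℕ, θ₀ + ε / (n + 2) ≠ θ₀ := by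
    intro n
    have : ε / ((n:ℝ) + 2) ≠ 0 := ne_of_gt (by positivity)
    simpa [add_eq_left] using this
  have hθtend : Filter.Tendsto (fun n : ℕ => θ₀ + ε / (n + 2)) Filter.atTop (nhds θ₀) := by
    have h1 : Filter.Tendsto (fun n : ℕ => ε / ((n:ℝ) + 2)) Filter.atTop (nhds 0) :=
      Filter.Tendsto.div_atTop tendsto_const_nhds
        (Filter.tendsto_atTop_add_const_right _ 2 tendsto_natCast_atTop_atTop)
    simpa using tendsto_const_nhds.add h1
  have hφ_meas : AEStronglyMeasurable (fun δ => deriv (f (x + δ)) θ₀) (rsGaussian d σ) := by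
    apply aestronglyMeasurable_of_tendsto_ae (f := fun (n : ℕ) δ =>
        ((θ₀ + ε / (n + 2)) - θ₀)⁻¹ * (f (x + δ) (θ₀ + ε / (n + 2)) - f (x + δ) θ₀))
      Filter.atTop
      (fun n => ((hm _ (hball (hθmem n))).sub (hm _ hθ₀U)).const_mul _)
    filter_upwards [hgood] with δ hδ
    have hd : HasDerivAt (f (x + δ)) (deriv (f (x + δ)) θ₀) θ₀ :=
      hδ θ₀ (Metric.mem_ball_self hε)
    have hs := hasDerivAt_iff_tendsto_slope.mp hd
    have htend' : Filter.Tendsto (fun n : ℕ => θ₀ + ε / (n + 2)) Filter.atTop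
        (nhdsWithin θ₀ {θ₀}ᶜ) :=
      tendsto_nhdsWithin_of_tendsto_nhds_of_eventually_within _ hθtend
        (Filter.Eventually.of_forall hθne)
    have : (fun n : ℕ => ((θ₀ + ε / (n + 2)) - θ₀)⁻¹ *
        (f (x + δ) (θ₀ + ε / (n + 2)) - f (x + δ) θ₀))
        = fun n : ℕ => slope (f (x + δ)) θ₀ (θ₀ + ε / (n + 2)) := by
      funext n; rw [slope_def_field]; ring
    rw [this]
    exact hs.comp htend'
  -- differentiation under the integral sign
  have hF_meas : ∀ᶠ θ in nhds θ₀, AEStronglyMeasurable (fun δ => f (x + δ) θ) (rsGaussian d σ) := by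
    filter_upwards [hU] with θ hθ using hm θ hθ
  have hbound' : ∀ᵐ δ ∂(rsGaussian d σ), ∀ θ ∈ Metric.ball θ₀ ε,
      ‖deriv (f (x + δ)) θ‖ ≤ h δ := by
    filter_upwards [hbound] with δ hδ θ hθ
    simpa [Real.norm_eq_abs] using hδ θ (hball hθ)
  obtain ⟨hφ_int, hF_deriv⟩ :=
    hasDerivAt_integral_of_dominated_loc_of_deriv_le (μ := rsGaussian d σ)
      (F := fun θ δ => f (x + δ) θ) (F' := fun θ δ => deriv (f (x + δ)) θ)
      (Metric.ball_mem_nhds θ₀ hε) hF_meas hψ_int hφ_meas hbound' hh hgood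
  set J : ℝ := ∫ δ, deriv (f (x + δ)) θ₀ ∂(rsGaussian d σ) with hJ
  set I : ℝ := ∫ δ, f (x + δ) θ₀ ∂(rsGaussian d σ) with hI
  -- RHS
  have hRHS : deriv (fun θ => ((∫ δ, f (x + δ) θ ∂(rsGaussian d σ)) - g) ^ 2) θ₀
      = 2 * (I - g) * J := by
    have h2 := ((hF_deriv.sub_const g).fun_pow 2).deriv
    rw [h2]
    push_cast
    ring
  rw [hRHS]
  -- pointwise derivative of the integrand
  have hgood₀ : ∀ᵐ δ ∂(rsGaussian d σ), HasDerivAt (f (x + δ)) (deriv (f (x + δ)) θ₀) θ₀ :=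
    hgood.mono fun δ hδ => hδ θ₀ (Metric.mem_ball_self hε)
  have hae : ∀ᵐ D ∂(Measure.pi fun _ : Fin 2 × Fin K => rsGaussian d σ),
      ∀ k : Fin 2 × Fin K, HasDerivAt (f (x + D k)) (deriv (f (x + D k)) θ₀) θ₀ :=
    Filter.eventually_all.2 fun k =>
      (MeasureTheory.Measure.tendsto_eval_ae_ae (μ := fun _ : Fin 2 × Fin K => rsGaussian d σ) (i := k)).eventually hgood₀
  have hderiv_eq : ∀ᵐ D ∂(Measure.pi fun _ : Fin 2 × Fin K => rsGaussian d σ),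
      deriv (fun θ =>
          ((K : ℝ)⁻¹ * ∑ i : Fin K, f (x + D (1, i)) θ - g) *
          ((K : ℝ)⁻¹ * ∑ i : Fin K, f (x + D (0, i)) θ - g)) θ₀
      = ((K : ℝ)⁻¹ * (∑ i : Fin K, (fun δ => deriv (f (x + δ)) θ₀) (D ((1 : Fin 2), i))) - 0) *
          ((K : ℝ)⁻¹ * (∑ i : Fin K, (fun δ => f (x + δ) θ₀) (D ((0 : Fin 2), i))) - g)
        + ((K : ℝ)⁻¹ * (∑ i : Fin K, (fun δ => f (x + δ) θ₀) (D ((1 : Fin 2), i))) - g) *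
          ((K : ℝ)⁻¹ * (∑ i : Fin K, (fun δ => deriv (f (x + δ)) θ₀) (D ((0 : Fin 2), i))) - 0) := by
    filter_upwards [hae] with D hD
    have h1 : HasDerivAt (fun θ => (K : ℝ)⁻¹ * ∑ i : Fin K, f (x + D (1, i)) θ - g)
        ((K : ℝ)⁻¹ * ∑ i : Fin K, deriv (f (x + D (1, i))) θ₀) θ₀ :=
      (HasDerivAt.const_mul _ (HasDerivAt.fun_sum fun i _ => hD (1, i))).sub_const g
    have h0 : HasDerivAt (fun θ => (K : ℝ)⁻¹ * ∑ i : Fin K, f (x + D (0, i)) θ - g)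
        ((K : ℝ)⁻¹ * ∑ i : Fin K, deriv (f (x + D (0, i))) θ₀) θ₀ :=
      (HasDerivAt.const_mul _ (HasDerivAt.fun_sum fun i _ => hD (0, i))).sub_const g
    rw [(h1.fun_mul h0).deriv]
    ring
  rw [integral_congr_ae hderiv_eq]
  -- split and evaluate the two cross terms
  have hne : ∀ i j : Fin K, ((1 : Fin 2), i) ≠ ((0 : Fin 2), j) := by
    intro i j hcon
    have h10 : (1 : Fin 2) = 0 := congrArg Prod.fst hcon
    exact absurd h10 (by decide)
  have c1 := cross_term (rsGaussian d σ) hφ_int hψ_int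
    (fun i : Fin K => ((1 : Fin 2), i)) (fun j : Fin K => ((0 : Fin 2), j)) hne ((K : ℝ)⁻¹) 0 g
  have c2 := cross_term (rsGaussian d σ) hψ_int hφ_int
    (fun i : Fin K => ((1 : Fin 2), i)) (fun j : Fin K => ((0 : Fin 2), j)) hne ((K : ℝ)⁻¹) g 0
  rw [integral_add c1.1 c2.1, c1.2, c2.2]
  have hKne : ((K : ℝ)) ≠ 0 := by positivity
  rw [← hJ, ← hI]  -- ensure J, I forms
  field_simp
  ring
end

section
/- Fix x ∈ ℝ^d, g ∈ ℝ, K ≥ 1. Assume δ ↦ ‖δ‖·|f(x+δ)| is integrable with respect to γ, and let m := E_{δ∼γ}[(δ/σ²)·f(x+δ)] ∈ ℝ^d. Let δ⁽¹⁾, δ⁽²⁾, δ⁽³⁾, δ⁽⁴⁾ be four groups, each consisting of K γ-distributed samples, with all 4K samples mutually independent, and set ĝ(δ⁽ʲ⁾) := (1/K)∑_{i=1}^K (δ⁽ʲ⁾_i/σ²)·f(x+δ⁽ʲ⁾_i) ∈ ℝ^d. Then the debiased residual loss L⁽²⁾ := (⟨ĝ(δ⁽¹⁾), ĝ(δ⁽²⁾)⟩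 − g)·(⟨ĝ(δ⁽³⁾), ĝ(δ⁽⁴⁾)⟩ − g) satisfies E[L⁽²⁾] = (‖m‖² − g)². -/
open MeasureTheory ProbabilityTheory Real

lemma mono_prod {α : Type*} [MeasurableSpace α] {μ : Measure α} [IsProbabilityMeasure μ]
    {ι : Type*} [Fintype ι] [DecidableEq ι] {κ : Type*} [Fintype κ] [DecidableEq κ]
    (p : κ → ι) (hp : Function.Injective p) (gk : κ → α → ℝ)
    (hg : ∀ k, Integrable (gk k) μ) :
    Integrable (fun D : ι → α => ∏ k, gk k (D (p k))) (Measure.pi fun _ => μ) ∧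
    ∫ D : ι → α, ∏ k, gk k (D (p k)) ∂(Measure.pi fun _ => μ) = ∏ k, ∫ a, gk k a ∂μ := by
  classical
  set h : ι → α → ℝ := fun c => if hc : ∃ k, p k = c then gk hc.choose else fun _ => 1 with hh
  have hpc : ∀ k, h (p k) = gk k := by
    intro k
    have hex : ∃ k', p k' = p k := ⟨k, rfl⟩
    simp only [hh, dif_pos hex]
    exact congrArg gk (hp hex.choose_spec)
  have hnot : ∀ c, (¬ ∃ k, p k = c) → h c = fun _ => 1 := by
    intro c hc; simp only [hh, dif_neg hc]
  have hint' : ∀ c, Integrable (h c) μ := by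
    intro c
    by_cases hc : ∃ k, p k = c
    · simp only [hh, dif_pos hc]; exact hg _
    · simp only [hh, dif_neg hc]; exact integrable_const 1
  have hfun : ∀ D : ι → α, ∏ k, gk k (D (p k)) = ∏ c, h c (D c) := by
    intro D
    rw [show (∏ c, h c (D c)) = ∏ c ∈ Finset.image p Finset.univ, h c (D c) from
      (Finset.prod_subset (Finset.subset_univ _) (fun c _ hc => by
        rw [hnot c (by simpa [Finset.mem_image] using hc)])).symm]
    rw [Finset.prod_image (fun a _ b _ hab => hp hab)]
    exact Finset.prod_congr rfl fun k _ => by rw [hpc]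
  letI : MeasureSpace α := ⟨μ⟩
  haveI : IsProbabilityMeasure (volume : Measure α) := ‹_›
  constructor
  · have := Integrable.fintype_prod (f := h) hint'
    simp only [hfun]
    exact this
  · have hI := integral_fintype_prod_eq_prod (E := fun _ : ι => α) h (μ := fun _ => volume)
    simp only [hfun]
    rw [show (∫ D : ι → α, ∏ c, h c (D c) ∂(Measure.pi fun _ => μ)) =
        ∫ D : ι → α, ∏ c, h c (D c) from rfl]
    erw [hI]
    rw [show (∏ c, ∫ a, h c a) = ∏ c ∈ Finset.image p Finset.univ, ∫ a, h c a from
      (Finset.prod_subset (Finset.subset_univ _) (fun c _ hc => by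
        rw [hnot c (by simpa [Finset.mem_image] using hc)]; simp)).symm]
    rw [Finset.prod_image (fun a _ b _ hab => hp hab)]
    refine Finset.prod_congr rfl fun k _ => ?_
    rw [hpc]
    rfl

lemma prod4 {α : Type*} [MeasurableSpace α] {μ : Measure α} [IsProbabilityMeasure μ]
    {K : ℕ} (hK : 1 ≤ K) (ψ : Fin 4 → α → ℝ) (hψ : ∀ j, Integrable (ψ j) μ) :
    Integrable (fun D : Fin 4 × Fin K → α =>
        ∏ j, ((K : ℝ)⁻¹ * ∑ i : Fin K, ψ j (D (j, i)))) (Measure.pi fun _ => μ) ∧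
    ∫ D : Fin 4 × Fin K → α, ∏ j, ((K : ℝ)⁻¹ * ∑ i : Fin K, ψ j (D (j, i)))
        ∂(Measure.pi fun _ => μ) = ∏ j, ∫ a, ψ j a ∂μ := by
  classical
  have hKne : (K : ℝ) ≠ 0 := Nat.cast_ne_zero.mpr (by omega)
  have expand : ∀ D : Fin 4 × Fin K → α,
      (∏ j, ((K : ℝ)⁻¹ * ∑ i : Fin K, ψ j (D (j, i)))) =
      ∑ t ∈ Fintype.piFinset (fun _ : Fin 4 => (Finset.univ : Finset (Fin K))),
        ((K : ℝ)⁻¹) ^ 4 * ∏ j, ψ j (D (j, t j)) := by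
    intro D
    rw [Finset.prod_mul_distrib, Finset.prod_const, Finset.prod_univ_sum, Finset.mul_sum]
    simp
  have hmono : ∀ t : Fin 4 → Fin K,
      Integrable (fun D : Fin 4 × Fin K → α => ∏ j, ψ j (D (j, t j)))
        (Measure.pi fun _ => μ) ∧
      ∫ D : Fin 4 × Fin K → α, ∏ j, ψ j (D (j, t j)) ∂(Measure.pi fun _ => μ)
        = ∏ j, ∫ a, ψ j a ∂μ := fun t =>
    mono_prod (fun j => ((j, t j) : Fin 4 × Fin K))
      (fun a b hab => congrArg Prod.fst hab) ψ hψ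
  constructor
  · have hI : Integrable (fun D : Fin 4 × Fin K → α =>
        ∑ t ∈ Fintype.piFinset (fun _ : Fin 4 => (Finset.univ : Finset (Fin K))),
          ((K : ℝ)⁻¹) ^ 4 * ∏ j, ψ j (D (j, t j))) (Measure.pi fun _ => μ) :=
      integrable_finset_sum _ (fun t _ => ((hmono t).1.const_mul _))
    exact hI.congr (Filter.Eventually.of_forall fun D => (expand D).symm)
  · rw [integral_congr_ae (Filter.Eventually.of_forall expand),
      integral_finset_sum _ (fun t _ => ((hmono t).1.const_mul _))]
    have : ∀ t ∈ Fintype.piFinset (fun _ : Fin 4 => (Finset.univ : Finset (Fin K))),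
        ∫ D : Fin 4 × Fin K → α, ((K : ℝ)⁻¹) ^ 4 * ∏ j, ψ j (D (j, t j))
          ∂(Measure.pi fun _ => μ) = ((K : ℝ)⁻¹) ^ 4 * ∏ j, ∫ a, ψ j a ∂μ := by
      intro t _
      rw [integral_const_mul, (hmono t).2]
    rw [Finset.sum_congr rfl this, Finset.sum_const, Fintype.card_piFinset]
    simp only [Finset.card_univ, Fintype.card_fin, Finset.prod_const, Finset.card_univ,
      Fintype.card_fin, nsmul_eq_mul]
    push_cast
    field_simp

lemma phi_int {d : ℕ} (σ : ℝ) (hσ : 0 < σ) {μ : Measure (Fin d → ℝ)}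
    (f : (Fin d → ℝ) → ℝ) (hf : Measurable f) (x : Fin d → ℝ)
    (hint : Integrable (fun δ => Real.sqrt (∑ i, δ i ^ 2) * |f (x + δ)|) μ) (m : Fin d) :
    Integrable (fun δ : Fin d → ℝ => δ m / σ ^ 2 * f (x + δ)) μ := by
  have hmeas : Measurable (fun δ : Fin d → ℝ => δ m / σ ^ 2 * f (x + δ)) :=
    ((measurable_pi_apply m).div_const _).mul (hf.comp (measurable_const.add measurable_id))
  refine ((hint.const_mul (σ ^ 2)⁻¹).mono hmeas.aestronglyMeasurable ?_)
  refine Filter.Eventually.of_forall fun δ => ?_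
  have h1 : |δ m| ≤ Real.sqrt (∑ i, δ i ^ 2) := by
    rw [← Real.sqrt_sq_eq_abs]
    exact Real.sqrt_le_sqrt (Finset.single_le_sum (f := fun i => δ i ^ 2)
      (fun i _ => sq_nonneg _) (Finset.mem_univ m))
  have h2 : (0:ℝ) < σ ^ 2 := by positivity
  have hs : (0:ℝ) ≤ Real.sqrt (∑ i, δ i ^ 2) := Real.sqrt_nonneg _
  simp only [Real.norm_eq_abs, abs_mul, abs_div, abs_abs]
  rw [abs_of_pos (by positivity : (0:ℝ) < σ ^ 2)]
  calc |δ m| * (σ ^ 2)⁻¹ * |f (x + δ)| ≤ Real.sqrt (∑ i, δ i ^ 2) * (σ ^ 2)⁻¹ * |f (x + δ)| := by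
        gcongr
    _ = |(σ ^ 2)⁻¹| * (|Real.sqrt (∑ i, δ i ^ 2)| * |f (x + δ)|) := by
        rw [abs_of_pos (by positivity : (0:ℝ) < (σ ^ 2)⁻¹), abs_of_nonneg hs]; ring

/-- the fully debiased HJB residual loss `L⁽²⁾`, built from four mutually
independent groups `D (j, ·)` (j = 0,1,2,3) of `K` i.i.d. `γ`-samples, with gradient
estimators `ĝ(δ⁽ʲ⁾) = (1/K)∑ᵢ (δ⁽ʲ⁾ᵢ/σ²) f(x+δ⁽ʲ⁾ᵢ)`, satisfies
`E[L⁽²⁾] = (‖m‖² − g)²` where `m = E_{δ∼γ}[(δ/σ²) f(x+δ)]`. -/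
theorem unbiased_hjb_residual_loss
    (d K : ℕ) (hK : 1 ≤ K) (σ : ℝ) (hσ : 0 < σ)
    (f : (Fin d → ℝ) → ℝ) (hf : Measurable f)
    (x : Fin d → ℝ) (g : ℝ)
    (hint : Integrable (fun δ => Real.sqrt (∑ i, δ i ^ 2) * |f (x + δ)|) (rsGaussian d σ)) :
    ∫ D : Fin 4 × Fin K → Fin d → ℝ,
        ((∑ m : Fin d,
            ((K : ℝ)⁻¹ * ∑ i : Fin K, D (0, i) m / σ ^ 2 * f (x + D (0, i))) *
            ((K : ℝ)⁻¹ * ∑ i : Fin K, D (1, i) m / σ ^ 2 * f (x + D (1, i)))) - g) *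
        ((∑ m : Fin d,
            ((K : ℝ)⁻¹ * ∑ i : Fin K, D (2, i) m / σ ^ 2 * f (x + D (2, i))) *
            ((K : ℝ)⁻¹ * ∑ i : Fin K, D (3, i) m / σ ^ 2 * f (x + D (3, i)))) - g)
      ∂(Measure.pi fun _ : Fin 4 × Fin K => rsGaussian d σ)
    = ((∑ m : Fin d, (∫ δ, δ m / σ ^ 2 * f (x + δ) ∂(rsGaussian d σ)) ^ 2) - g) ^ 2 := by
  classical
  have hKne : (K : ℝ) ≠ 0 := Nat.cast_ne_zero.mpr (by omega)
  set μ : Measure (Fin d → ℝ) := rsGaussian d σ with hμ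
  set ν : Measure (Fin 4 × Fin K → Fin d → ℝ) := Measure.pi fun _ => μ with hν
  set φ : Fin d → (Fin d → ℝ) → ℝ := fun m δ => δ m / σ ^ 2 * f (x + δ) with hφ
  set c : Fin d → ℝ := fun m => ∫ δ, φ m δ ∂μ with hc
  have hφi : ∀ m, Integrable (φ m) μ := fun m => phi_int σ hσ f hf x hint m
  have hone : Integrable (fun _ : Fin d → ℝ => (1 : ℝ)) μ := integrable_const 1
  have hint1 : ∫ δ, (1 : ℝ) ∂μ = 1 := by simp
  -- the three families
  have hψ4 : ∀ p : Fin d × Fin d, ∀ j : Fin 4,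
      Integrable ((![φ p.1, φ p.1, φ p.2, φ p.2]) j) μ := by
    intro p j; fin_cases j <;> simp <;> exact hφi _
  have hψ01 : ∀ m : Fin d, ∀ j : Fin 4,
      Integrable ((![φ m, φ m, fun _ => 1, fun _ => 1]) j) μ := by
    intro m j; fin_cases j <;> simp <;> first | exact hφi _ | exact hone
  have hψ23 : ∀ m : Fin d, ∀ j : Fin 4,
      Integrable ((![fun _ => 1, fun _ => 1, φ m, φ m]) j) μ := by
    intro m j; fin_cases j <;> simp <;> first | exact hφi _ | exact hone
  -- integrability and values
  have h4 := fun p : Fin d × Fin d => prod4 hK _ (hψ4 p)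
  have h01 := fun m : Fin d => prod4 hK _ (hψ01 m)
  have h23 := fun m : Fin d => prod4 hK _ (hψ23 m)
  have hval4 : ∀ p : Fin d × Fin d,
      ∫ D : Fin 4 × Fin K → Fin d → ℝ,
        ∏ j, ((K : ℝ)⁻¹ * ∑ i : Fin K, (![φ p.1, φ p.1, φ p.2, φ p.2]) j (D (j, i))) ∂ν
      = (c p.1 * c p.1) * (c p.2 * c p.2) := by
    intro p
    rw [(h4 p).2, Fin.prod_univ_four]
    simp only [Matrix.cons_val_zero, Matrix.cons_val_one, Matrix.head_cons,
      Matrix.cons_val_two, Matrix.tail_cons, Matrix.cons_val_three]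
    rw [hc]; ring
  have hval01 : ∀ m : Fin d,
      ∫ D : Fin 4 × Fin K → Fin d → ℝ,
        ∏ j, ((K : ℝ)⁻¹ * ∑ i : Fin K, (![φ m, φ m, fun _ => 1, fun _ => 1]) j (D (j, i))) ∂ν
      = c m * c m := by
    intro m
    rw [(h01 m).2, Fin.prod_univ_four]
    simp only [Matrix.cons_val_zero, Matrix.cons_val_one, Matrix.head_cons,
      Matrix.cons_val_two, Matrix.tail_cons, Matrix.cons_val_three]
    rw [hint1, hc]; ring
  have hval23 : ∀ m : Fin d,
      ∫ D : Fin 4 × Fin K → Fin d → ℝ,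
        ∏ j, ((K : ℝ)⁻¹ * ∑ i : Fin K, (![fun _ => 1, fun _ => 1, φ m, φ m]) j (D (j, i))) ∂ν
      = c m * c m := by
    intro m
    rw [(h23 m).2, Fin.prod_univ_four]
    simp only [Matrix.cons_val_zero, Matrix.cons_val_one, Matrix.head_cons,
      Matrix.cons_val_two, Matrix.tail_cons, Matrix.cons_val_three]
    rw [hint1, hc]; ring
  -- pointwise expansion of the integrand
  have key : ∀ D : Fin 4 × Fin K → Fin d → ℝ,
      ((∑ m : Fin d,
          ((K : ℝ)⁻¹ * ∑ i : Fin K, D (0, i) m / σ ^ 2 * f (x + D (0, i))) *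
          ((K : ℝ)⁻¹ * ∑ i : Fin K, D (1, i) m / σ ^ 2 * f (x + D (1, i)))) - g) *
      ((∑ m : Fin d,
          ((K : ℝ)⁻¹ * ∑ i : Fin K, D (2, i) m / σ ^ 2 * f (x + D (2, i))) *
          ((K : ℝ)⁻¹ * ∑ i : Fin K, D (3, i) m / σ ^ 2 * f (x + D (3, i)))) - g)
      =
      (∑ p : Fin d × Fin d,
          ∏ j, ((K : ℝ)⁻¹ * ∑ i : Fin K, (![φ p.1, φ p.1, φ p.2, φ p.2]) j (D (j, i))))
      - g * (∑ m : Fin d,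
          ∏ j, ((K : ℝ)⁻¹ * ∑ i : Fin K, (![φ m, φ m, fun _ => 1, fun _ => 1]) j (D (j, i))))
      - g * (∑ m : Fin d,
          ∏ j, ((K : ℝ)⁻¹ * ∑ i : Fin K, (![fun _ => 1, fun _ => 1, φ m, φ m]) j (D (j, i))))
      + g * g := by
    intro D
    have e4 : ∀ p : Fin d × Fin d,
        ∏ j, ((K : ℝ)⁻¹ * ∑ i : Fin K, (![φ p.1, φ p.1, φ p.2, φ p.2]) j (D (j, i)))
        = (((K : ℝ)⁻¹ * ∑ i : Fin K, φ p.1 (D (0, i))) *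
            ((K : ℝ)⁻¹ * ∑ i : Fin K, φ p.1 (D (1, i)))) *
          (((K : ℝ)⁻¹ * ∑ i : Fin K, φ p.2 (D (2, i))) *
            ((K : ℝ)⁻¹ * ∑ i : Fin K, φ p.2 (D (3, i)))) := by
      intro p
      rw [Fin.prod_univ_four]
      simp only [Matrix.cons_val_zero, Matrix.cons_val_one, Matrix.head_cons,
        Matrix.cons_val_two, Matrix.tail_cons, Matrix.cons_val_three]
      ring
    have e01 : ∀ m : Fin d,
        ∏ j, ((K : ℝ)⁻¹ * ∑ i : Fin K, (![φ m, φ m, fun _ => 1, fun _ => 1]) j (D (j, i)))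
        = ((K : ℝ)⁻¹ * ∑ i : Fin K, φ m (D (0, i))) *
          ((K : ℝ)⁻¹ * ∑ i : Fin K, φ m (D (1, i))) := by
      intro m
      rw [Fin.prod_univ_four]
      simp only [Matrix.cons_val_zero, Matrix.cons_val_one, Matrix.head_cons,
        Matrix.cons_val_two, Matrix.tail_cons, Matrix.cons_val_three,
        Finset.sum_const, Finset.card_univ, Fintype.card_fin, nsmul_eq_mul, mul_one,
        inv_mul_cancel₀ hKne]
      try ring
    have e23 : ∀ m : Fin d,
        ∏ j, ((K : ℝ)⁻¹ * ∑ i : Fin K, (![fun _ => 1, fun _ => 1, φ m, φ m]) j (D (j, i)))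
        = ((K : ℝ)⁻¹ * ∑ i : Fin K, φ m (D (2, i))) *
          ((K : ℝ)⁻¹ * ∑ i : Fin K, φ m (D (3, i))) := by
      intro m
      rw [Fin.prod_univ_four]
      simp only [Matrix.cons_val_zero, Matrix.cons_val_one, Matrix.head_cons,
        Matrix.cons_val_two, Matrix.tail_cons, Matrix.cons_val_three,
        Finset.sum_const, Finset.card_univ, Fintype.card_fin, nsmul_eq_mul, mul_one,
        inv_mul_cancel₀ hKne]
      try ring
    simp only [e4, e01, e23, Fintype.sum_prod_type]
    rw [← Finset.sum_mul_sum]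
    simp only [hφ]
    ring
  -- put it together
  rw [integral_congr_ae (Filter.Eventually.of_forall key)]
  have iA : Integrable (fun D : Fin 4 × Fin K → Fin d → ℝ => ∑ p : Fin d × Fin d,
      ∏ j, ((K : ℝ)⁻¹ * ∑ i : Fin K, (![φ p.1, φ p.1, φ p.2, φ p.2]) j (D (j, i)))) ν :=
    integrable_finset_sum _ (fun p _ => (h4 p).1)
  have iB : Integrable (fun D : Fin 4 × Fin K → Fin d → ℝ => ∑ m : Fin d,
      ∏ j, ((K : ℝ)⁻¹ * ∑ i : Fin K, (![φ m, φ m, fun _ => 1, fun _ => 1]) j (D (j, i)))) ν :=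
    integrable_finset_sum _ (fun m _ => (h01 m).1)
  have iC : Integrable (fun D : Fin 4 × Fin K → Fin d → ℝ => ∑ m : Fin d,
      ∏ j, ((K : ℝ)⁻¹ * ∑ i : Fin K, (![fun _ => 1, fun _ => 1, φ m, φ m]) j (D (j, i)))) ν :=
    integrable_finset_sum _ (fun m _ => (h23 m).1)
  have iB' : Integrable (fun D : Fin 4 × Fin K → Fin d → ℝ => g * ∑ m : Fin d,
      ∏ j, ((K : ℝ)⁻¹ * ∑ i : Fin K, (![φ m, φ m, fun _ => 1, fun _ => 1]) j (D (j, i)))) ν :=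
    iB.const_mul g
  have iC' : Integrable (fun D : Fin 4 × Fin K → Fin d → ℝ => g * ∑ m : Fin d,
      ∏ j, ((K : ℝ)⁻¹ * ∑ i : Fin K, (![fun _ => 1, fun _ => 1, φ m, φ m]) j (D (j, i)))) ν :=
    iC.const_mul g
  have iAB : Integrable (fun D : Fin 4 × Fin K → Fin d → ℝ =>
      (∑ p : Fin d × Fin d,
        ∏ j, ((K : ℝ)⁻¹ * ∑ i : Fin K, (![φ p.1, φ p.1, φ p.2, φ p.2]) j (D (j, i))))
      - g * ∑ m : Fin d,
        ∏ j, ((K : ℝ)⁻¹ * ∑ i : Fin K, (![φ m, φ m, fun _ => 1, fun _ => 1]) j (D (j, i)))) ν :=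
    iA.sub iB'
  have iABC : Integrable (fun D : Fin 4 × Fin K → Fin d → ℝ =>
      ((∑ p : Fin d × Fin d,
        ∏ j, ((K : ℝ)⁻¹ * ∑ i : Fin K, (![φ p.1, φ p.1, φ p.2, φ p.2]) j (D (j, i))))
      - g * ∑ m : Fin d,
        ∏ j, ((K : ℝ)⁻¹ * ∑ i : Fin K, (![φ m, φ m, fun _ => 1, fun _ => 1]) j (D (j, i))))
      - g * ∑ m : Fin d,
        ∏ j, ((K : ℝ)⁻¹ * ∑ i : Fin K, (![fun _ => 1, fun _ => 1, φ m, φ m]) j (D (j, i)))) ν :=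
    iAB.sub iC'
  rw [integral_add iABC (integrable_const (g * g)),
    integral_sub iAB iC',
    integral_sub iA iB',
    integral_finset_sum _ (fun p _ => (h4 p).1),
    integral_const_mul, integral_finset_sum _ (fun m _ => (h01 m).1),
    integral_const_mul, integral_finset_sum _ (fun m _ => (h23 m).1),
    integral_const]
  simp only [← hν, hval4, hval01, hval23, probReal_univ, measure_univ, ENNReal.toReal_one, smul_eq_mul, one_mul]
  have hrhs : (∑ m : Fin d, (∫ δ, δ m / σ ^ 2 * f (x + δ) ∂μ) ^ 2)
      = ∑ m : Fin d, c m ^ 2 := by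
    simp only [hc, hφ]
  rw [hrhs]
  simp only [Fintype.sum_prod_type]
  rw [← Finset.sum_mul_sum]
  have hsq : (∑ m : Fin d, c m * c m) = ∑ m : Fin d, c m ^ 2 :=
    Finset.sum_congr rfl fun m _ => (pow_two (c m)).symm
  rw [hsq]
  ring
end

section
/- Let f : ℝ^d → ℝ be measurable with at most polynomial growth: |f(y)| ≤ C(1+‖y‖)^p for some C ≥ 0, p ∈ ℕ and all y ∈ ℝ^d. Then the smoothed function u(x) := E_{δ∼γ}[f(x+δ)] is differentiable on ℝ^d and its gradient is ∇u(x) = E_{δ∼γ}[(δ/σ²)·f(x+δ)] for every x ∈ ℝ^d. -/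
open MeasureTheory ProbabilityTheory Real
open scoped NNReal ENNReal

lemma aux_one_add_sum_le_prod {ι : Type*} (s : Finset ι) (a : ι → ℝ)
    (ha : ∀ i ∈ s, 0 ≤ a i) :
    1 + ∑ i ∈ s, a i ≤ ∏ i ∈ s, (1 + a i) := by
  induction s using Finset.cons_induction with
  | empty => simp
  | cons i s hi ih =>
    rw [Finset.sum_cons, Finset.prod_cons]
    have h0 : 0 ≤ a i := ha i (Finset.mem_cons_self _ _)
    have hs : ∀ j ∈ s, 0 ≤ a j := fun j hj => ha j (Finset.mem_cons_of_mem hj)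
    have h1 := ih hs
    have h2 : 0 ≤ ∑ j ∈ s, a j := Finset.sum_nonneg hs
    nlinarith [mul_le_mul_of_nonneg_left h1 h0]

lemma aux_integrable_poly_gauss (q : ℕ) {b : ℝ} (hb : 0 < b) :
    Integrable (fun t : ℝ => (1 + |t|) ^ q * Real.exp (-b * t ^ 2)) := by
  have h : ∀ t : ℝ, (1 + |t|) ^ q * Real.exp (-b * t ^ 2)
      = ∑ k ∈ Finset.range (q + 1), (q.choose k : ℝ) * (|t| ^ k * Real.exp (-b * t ^ 2)) := by
    intro t
    rw [add_comm (1:ℝ) |t|, add_pow, Finset.sum_mul]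
    exact Finset.sum_congr rfl fun k _ => by ring
  simp_rw [h]
  refine integrable_finset_sum _ fun k _ => Integrable.const_mul ?_ _
  have h2 := (integrable_rpow_mul_exp_neg_mul_sq hb
    (show (-1:ℝ) < (k:ℝ) by exact lt_of_lt_of_le (by norm_num) (Nat.cast_nonneg k))).abs
  refine h2.congr (Filter.Eventually.of_forall fun t => ?_)
  show |t ^ (k:ℝ) * rexp (-b * t ^ 2)| = |t| ^ k * rexp (-b * t ^ 2)
  rw [abs_mul, abs_of_nonneg (Real.exp_pos _).le, Real.rpow_natCast, abs_pow]

lemma rsGaussian_eq_withDensity (d : ℕ) {σ : ℝ} (hσ : 0 < σ) :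
    rsGaussian d σ = (volume : Measure (Fin d → ℝ)).withDensity
      (fun z => ENNReal.ofReal (∏ i, gaussianPDFReal 0 (σ.toNNReal ^ 2) (z i))) := by
  set v : ℝ≥0 := σ.toNNReal ^ 2 with hvdef
  have hv0 : v ≠ 0 := by
    simp only [hvdef, ne_eq, pow_eq_zero_iff (two_ne_zero), Real.toNNReal_eq_zero, not_le]
    exact hσ
  unfold rsGaussian
  refine Measure.pi_eq fun s hs => ?_
  rw [withDensity_apply _ (MeasurableSet.univ_pi hs),
    ← lintegral_indicator (MeasurableSet.univ_pi hs)]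
  have hind : ∀ z : Fin d → ℝ,
      (Set.univ.pi s).indicator (fun z => ENNReal.ofReal (∏ i, gaussianPDFReal 0 v (z i))) z
        = ENNReal.ofReal (∏ i, (s i).indicator (gaussianPDFReal 0 v) (z i)) := by
    intro z
    by_cases hz : z ∈ Set.univ.pi s
    · rw [Set.indicator_of_mem hz]
      congr 1
      exact Finset.prod_congr rfl fun i _ =>
        (Set.indicator_of_mem (hz i (Set.mem_univ i)) _).symm
    · rw [Set.indicator_of_notMem hz]
      rw [Set.mem_univ_pi] at hz
      push_neg at hz
      obtain ⟨i, hi⟩ := hz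
      rw [Finset.prod_eq_zero (Finset.mem_univ i) (Set.indicator_of_notMem hi _),
        ENNReal.ofReal_zero]
  simp_rw [hind]
  have hint : ∀ i : Fin d, Integrable ((s i).indicator (gaussianPDFReal 0 v)) :=
    fun i => (integrable_gaussianPDFReal 0 v).indicator (hs i)
  have hnn : ∀ (i : Fin d) (t : ℝ), 0 ≤ (s i).indicator (gaussianPDFReal 0 v) t :=
    fun i t => Set.indicator_nonneg (fun t _ => gaussianPDFReal_nonneg 0 v t) t
  rw [volume_pi]
  rw [← ofReal_integral_eq_lintegral_ofReal (Integrable.fintype_prod hint)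
    (Filter.Eventually.of_forall fun z => Finset.prod_nonneg fun i _ => hnn i (z i))]
  rw [integral_fintype_prod_eq_prod (𝕜 := ℝ)
    (fun i => (s i).indicator (gaussianPDFReal 0 v))]
  rw [ENNReal.ofReal_prod_of_nonneg (fun i _ => integral_nonneg (hnn i))]
  refine Finset.prod_congr rfl fun i _ => ?_
  rw [ofReal_integral_eq_lintegral_ofReal (hint i) (Filter.Eventually.of_forall (hnn i)),
    gaussianReal_apply 0 hv0 (s i)]
  rw [← lintegral_indicator (hs i)]
  congr 1
  funext t
  by_cases ht : t ∈ s i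
  · simp [Set.indicator_of_mem ht, gaussianPDF]
  · simp [Set.indicator_of_notMem ht]

set_option maxHeartbeats 2000000 in
/-- if `f` is measurable with at most polynomial growth, then the
randomized-smoothed function `u(x) = E_{δ∼γ}[f(x+δ)]` is differentiable on `ℝ^d` and
its gradient is `∇u(x) = E_{δ∼γ}[(δ/σ²) f(x+δ)]` (componentwise:
`∂u/∂x_j (x) = E[(δ_j/σ²) f(x+δ)]`). -/
theorem smoothed_gradient_formula
    (d : ℕ) (σ : ℝ) (hσ : 0 < σ)
    (f : (Fin d → ℝ) → ℝ) (hf : Measurable f)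
    (C : ℝ) (hC : 0 ≤ C) (p : ℕ)
    (hgrowth : ∀ y, |f y| ≤ C * (1 + Real.sqrt (∑ i, y i ^ 2)) ^ p) :
    Differentiable ℝ (fun x => ∫ δ, f (x + δ) ∂(rsGaussian d σ)) ∧
    ∀ (x : Fin d → ℝ) (j : Fin d),
      fderiv ℝ (fun x => ∫ δ, f (x + δ) ∂(rsGaussian d σ)) x (Pi.single j 1)
        = ∫ δ, δ j / σ ^ 2 * f (x + δ) ∂(rsGaussian d σ) := by
  classical
  have hσ2 : (0:ℝ) < σ ^ 2 := by positivity
  set v : ℝ≥0 := σ.toNNReal ^ 2 with hvdef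
  have hvr : (v : ℝ) = σ ^ 2 := by
    rw [hvdef]; push_cast; rw [Real.coe_toNNReal σ hσ.le]
  set c : ℝ := (Real.sqrt (2 * π * σ ^ 2))⁻¹ with hcdef
  have hc0 : 0 ≤ c := by rw [hcdef]; positivity
  set g : ℝ → ℝ := gaussianPDFReal 0 v with hgdef
  have hgnn : ∀ t, 0 ≤ g t := gaussianPDFReal_nonneg 0 v
  have hgmeas : Measurable g := measurable_gaussianPDFReal 0 v
  have hgform : ∀ t, g t = c * Real.exp (-(2 * σ ^ 2)⁻¹ * t ^ 2) := by
    intro t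
    show (Real.sqrt (2 * π * (v:ℝ)))⁻¹ * Real.exp (-(t - 0) ^ 2 / (2 * (v:ℝ))) = _
    rw [hvr, hcdef]
    congr 1
    ring
  set G : (Fin d → ℝ) → ℝ := fun z => ∏ i, g (z i) with hGdef
  have hGnn : ∀ z, 0 ≤ G z := fun z => Finset.prod_nonneg fun i _ => hgnn _
  have hGmeas : Measurable G :=
    Finset.measurable_prod _ fun i _ => hgmeas.comp (measurable_pi_apply i)
  have hGform : ∀ z : Fin d → ℝ,
      G z = c ^ d * Real.exp (-(2 * σ ^ 2)⁻¹ * ∑ i, (z i) ^ 2) := by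
    intro z
    show (∏ i, g (z i)) = _
    simp_rw [hgform]
    rw [Finset.prod_mul_distrib, Finset.prod_const, Finset.card_univ, Fintype.card_fin,
      ← Real.exp_sum, ← Finset.mul_sum]
  -- transfer from the Gaussian measure to Lebesgue
  have htrans : ∀ h : (Fin d → ℝ) → ℝ,
      ∫ z, h z ∂(rsGaussian d σ) = ∫ z, G z * h z ∂(volume) := by
    intro h
    rw [rsGaussian_eq_withDensity d hσ]
    rw [show (fun z : Fin d → ℝ =>
          ENNReal.ofReal (∏ i, gaussianPDFReal 0 (σ.toNNReal ^ 2) (z i)))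
        = (fun z => ((Real.toNNReal (G z) : ℝ≥0) : ℝ≥0∞)) from rfl]
    rw [integral_withDensity_eq_integral_smul (hGmeas.real_toNNReal) h]
    refine integral_congr_ae (Filter.Eventually.of_forall fun z => ?_)
    simp [NNReal.smul_def, Real.coe_toNNReal _ (hGnn z)]
  -- translation invariance
  have hshift : ∀ (x : Fin d → ℝ) (h : (Fin d → ℝ) → ℝ),
      ∫ δ, G δ * h (x + δ) ∂(volume) = ∫ y, G (y - x) * h y ∂(volume) := by
    intro x h
    rw [← integral_add_right_eq_self (μ := volume) (fun y => G (y - x) * h y) x]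
    refine integral_congr_ae (Filter.Eventually.of_forall fun δ => ?_)
    simp [add_sub_cancel_right, add_comm]
  have hu : ∀ x : Fin d → ℝ,
      ∫ δ, f (x + δ) ∂(rsGaussian d σ) = ∫ y, G (y - x) * f y ∂(volume) := by
    intro x
    rw [htrans (fun δ => f (x + δ))]
    exact hshift x f
  have hueq : (fun x => ∫ δ, f (x + δ) ∂(rsGaussian d σ))
      = fun x => ∫ y, G (y - x) * f y ∂(volume) := funext hu
  -- the linear functional
  set D : (Fin d → ℝ) → ((Fin d → ℝ) →L[ℝ] ℝ) :=
    fun w => ∑ i, w i • (ContinuousLinearMap.proj (R := ℝ) (φ := fun _ : Fin d => ℝ) i)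
    with hDdef
  have hDapply : ∀ w u : Fin d → ℝ, D w u = ∑ i, w i * u i := by
    intro w u
    show (∑ i, w i • (ContinuousLinearMap.proj (R := ℝ) (φ := fun _ : Fin d => ℝ) i)) u = _
    rw [ContinuousLinearMap.sum_apply]
    simp
  have hDnorm : ∀ w, ‖D w‖ ≤ ∑ i, |w i| := by
    intro w
    refine (norm_sum_le _ _).trans (Finset.sum_le_sum fun i _ => ?_)
    refine (norm_smul_le (w i)
      (ContinuousLinearMap.proj (R := ℝ) (φ := fun _ : Fin d => ℝ) i)).trans ?_
    have hpr : ‖(ContinuousLinearMap.proj (R := ℝ) (φ := fun _ : Fin d => ℝ) i)‖ ≤ 1 :=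
      ContinuousLinearMap.opNorm_le_bound _ zero_le_one fun u => by
        simpa using norm_le_pi_norm u i
    simpa [Real.norm_eq_abs] using mul_le_of_le_one_right (norm_nonneg (w i)) hpr
  set F' : (Fin d → ℝ) → (Fin d → ℝ) → ((Fin d → ℝ) →L[ℝ] ℝ) :=
    fun x y => ((σ ^ 2)⁻¹ * (G (y - x) * f y)) • D (y - x) with hF'def
  -- pointwise differentiability
  have hdiff : ∀ (y x : Fin d → ℝ),
      HasFDerivAt (fun x => G (y - x) * f y) (F' x y) x := by
    intro y x
    have hsub : ∀ i : Fin d, HasFDerivAt (fun x : Fin d → ℝ => y i - x i)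
        ((0 : (Fin d → ℝ) →L[ℝ] ℝ) -
          ContinuousLinearMap.proj (R := ℝ) (φ := fun _ : Fin d => ℝ) i) x :=
      fun i => (hasFDerivAt_const (y i) x).sub
        (ContinuousLinearMap.proj (R := ℝ) (φ := fun _ : Fin d => ℝ) i).hasFDerivAt
    have hsq : ∀ i : Fin d, HasFDerivAt (fun x : Fin d → ℝ => (y i - x i) * (y i - x i))
        ((y i - x i) • ((0 : (Fin d → ℝ) →L[ℝ] ℝ) -
            ContinuousLinearMap.proj (R := ℝ) (φ := fun _ : Fin d => ℝ) i)
          + (y i - x i) • ((0 : (Fin d → ℝ) →L[ℝ] ℝ) -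
            ContinuousLinearMap.proj (R := ℝ) (φ := fun _ : Fin d => ℝ) i)) x :=
      fun i => (hsub i).mul (hsub i)
    have hS : HasFDerivAt (fun x : Fin d → ℝ => ∑ i, (y i - x i) * (y i - x i))
        (∑ i, ((y i - x i) • ((0 : (Fin d → ℝ) →L[ℝ] ℝ) -
            ContinuousLinearMap.proj (R := ℝ) (φ := fun _ : Fin d => ℝ) i)
          + (y i - x i) • ((0 : (Fin d → ℝ) →L[ℝ] ℝ) -
            ContinuousLinearMap.proj (R := ℝ) (φ := fun _ : Fin d => ℝ) i))) x :=
      HasFDerivAt.fun_sum fun i _ => hsq i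
    have hmc := (((hS.const_mul (-(2 * σ ^ 2)⁻¹)).exp).const_mul (c ^ d)).mul_const (f y)
    have hfun : (fun x : Fin d → ℝ => G (y - x) * f y)
        = fun x => c ^ d * Real.exp (-(2 * σ ^ 2)⁻¹ * ∑ i, (y i - x i) * (y i - x i)) * f y := by
      funext x
      rw [hGform]
      simp [Pi.sub_apply, pow_two]
    rw [hfun]
    refine hmc.congr_fderiv ?_
    symm
    ext u
    rw [hF'def]
    simp only [ContinuousLinearMap.smul_apply, smul_eq_mul, ContinuousLinearMap.sum_apply,
      ContinuousLinearMap.add_apply, ContinuousLinearMap.sub_apply,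
      ContinuousLinearMap.zero_apply, ContinuousLinearMap.neg_apply, ContinuousLinearMap.proj_apply, hDapply, hGform,
      Pi.sub_apply, zero_sub, pow_two]
    simp only [Finset.mul_sum]
    refine Finset.sum_congr rfl fun i _ => ?_
    field_simp
    ring
  have hF'norm : ∀ x y, ‖F' x y‖
      ≤ (σ ^ 2)⁻¹ * (G (y - x) * |f y|) * ∑ i, |y i - x i| := by
    intro x y
    show ‖((σ ^ 2)⁻¹ * (G (y - x) * f y)) • D (y - x)‖
      ≤ (σ ^ 2)⁻¹ * (G (y - x) * |f y|) * ∑ i, |y i - x i|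
    refine (norm_smul_le ((σ ^ 2)⁻¹ * (G (y - x) * f y)) (D (y - x))).trans ?_
    rw [Real.norm_eq_abs, abs_mul, abs_mul,
      abs_of_nonneg (inv_nonneg.mpr hσ2.le), abs_of_nonneg (hGnn _)]
    refine mul_le_mul_of_nonneg_left ?_
      (mul_nonneg (inv_nonneg.mpr hσ2.le) (mul_nonneg (hGnn _) (abs_nonneg _)))
    simpa [Pi.sub_apply] using hDnorm (y - x)
  set b : ℝ := (4 * σ ^ 2)⁻¹ with hbdef
  have hb : 0 < b := by rw [hbdef]; positivity
  have hg_bound : ∀ s t A : ℝ, |s| ≤ A →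
      g (t - s) ≤ (c * Real.exp (A ^ 2 * (2 * σ ^ 2)⁻¹)) * Real.exp (-b * t ^ 2) := by
    intro s t A hA
    rw [hgform, mul_assoc, ← Real.exp_add]
    refine mul_le_mul_of_nonneg_left (Real.exp_le_exp.mpr ?_) hc0
    have h1 : s ^ 2 ≤ A ^ 2 := by nlinarith [sq_abs s, abs_nonneg s]
    have h2 : (0:ℝ) < (2 * σ ^ 2)⁻¹ := by positivity
    have hb2 : b * 2 = (2 * σ ^ 2)⁻¹ := by
      rw [hbdef, show (4:ℝ) * σ ^ 2 = 2 * σ ^ 2 * 2 by ring, mul_inv]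
      field_simp
    nlinarith [mul_nonneg h2.le (sq_nonneg (t - 2 * s)),
      mul_le_mul_of_nonneg_left h1 h2.le, hb2]
  -- main statement per point
  have key : ∀ x₀ : Fin d → ℝ,
      Integrable (F' x₀) volume ∧
      HasFDerivAt (fun x => ∫ y, G (y - x) * f y ∂(volume))
        (∫ y, F' x₀ y ∂(volume)) x₀ := by
    intro x₀
    set A : Fin d → ℝ := fun i => |x₀ i| + 1 with hAdef
    have hA0 : ∀ i, 0 ≤ A i := fun i => by
      show (0:ℝ) ≤ |x₀ i| + 1; positivity
    set K : Fin d → ℝ := fun i => c * Real.exp ((A i) ^ 2 * (2 * σ ^ 2)⁻¹) with hKdef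
    have hK0 : ∀ i, 0 ≤ K i := fun i =>
      mul_nonneg hc0 (Real.exp_pos _).le
    have hxA : ∀ x ∈ Metric.ball x₀ 1, ∀ i, |x i| ≤ A i := by
      intro x hx i
      have h1 : |x i - x₀ i| ≤ ‖x - x₀‖ := by
        simpa [Real.norm_eq_abs] using norm_le_pi_norm (x - x₀) i
      have h2 : ‖x - x₀‖ < 1 := by rwa [Metric.mem_ball, dist_eq_norm] at hx
      show |x i| ≤ |x₀ i| + 1
      have h3 : |x i| ≤ |x i - x₀ i| + |x₀ i| := by
        calc |x i| = |(x i - x₀ i) + x₀ i| := by rw [sub_add_cancel]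
          _ ≤ |x i - x₀ i| + |x₀ i| := abs_add_le _ _
      linarith
    have hGbd : ∀ y : Fin d → ℝ, ∀ x ∈ Metric.ball x₀ 1,
        G (y - x) ≤ ∏ i, (K i * Real.exp (-b * (y i) ^ 2)) := by
      intro y x hx
      show (∏ i, g ((y - x) i)) ≤ _
      refine Finset.prod_le_prod (fun i _ => hgnn _) fun i _ => ?_
      rw [Pi.sub_apply]
      exact hg_bound (x i) (y i) (A i) (hxA x hx i)
    have hprodKe_nn : ∀ y : Fin d → ℝ,
        (0:ℝ) ≤ ∏ i, (K i * Real.exp (-b * (y i) ^ 2)) := fun y =>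
      Finset.prod_nonneg fun i _ => mul_nonneg (hK0 i) (Real.exp_pos _).le
    have hfbd : ∀ y : Fin d → ℝ, |f y| ≤ C * ∏ i, (1 + |y i|) ^ p := by
      intro y
      refine (hgrowth y).trans (mul_le_mul_of_nonneg_left ?_ hC)
      have h1 : Real.sqrt (∑ i, (y i) ^ 2) ≤ ∑ i, |y i| := by
        rw [show (∑ i, (y i) ^ 2) = ∑ i, |y i| ^ 2 by simp [sq_abs]]
        have h := Real.sqrt_le_sqrt
          (Finset.sum_sq_le_sq_sum_of_nonneg (fun i (_ : i ∈ Finset.univ) => abs_nonneg (y i)))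
        rwa [Real.sqrt_sq (Finset.sum_nonneg fun i _ => abs_nonneg (y i))] at h
      have h2 : 1 + ∑ i, |y i| ≤ ∏ i, (1 + |y i|) :=
        aux_one_add_sum_le_prod Finset.univ _ (fun i _ => abs_nonneg _)
      calc (1 + Real.sqrt (∑ i, (y i) ^ 2)) ^ p ≤ (∏ i, (1 + |y i|)) ^ p := by
            refine pow_le_pow_left₀ (by positivity) (by linarith) p
        _ = ∏ i, (1 + |y i|) ^ p := by rw [Finset.prod_pow]
    have hsumbd : ∀ y : Fin d → ℝ, ∀ x ∈ Metric.ball x₀ 1,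
        (∑ i, |y i - x i|) ≤ ∏ i, (1 + (|y i| + A i)) := by
      intro y x hx
      have h1 : ∀ i, |y i - x i| ≤ |y i| + A i := by
        intro i
        have h := hxA x hx i
        have h' : |y i - x i| ≤ |y i| + |x i| := by
          rw [sub_eq_add_neg]
          simpa [abs_neg] using abs_add_le (y i) (-(x i))
        linarith
      have h2 : (0:ℝ) ≤ ∑ i, (|y i| + A i) :=
        Finset.sum_nonneg fun i _ => by positivity
      calc ∑ i, |y i - x i| ≤ ∑ i, (|y i| + A i) := Finset.sum_le_sum fun i _ => h1 i
        _ ≤ 1 + ∑ i, (|y i| + A i) := by linarith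
        _ ≤ ∏ i, (1 + (|y i| + A i)) :=
            aux_one_add_sum_le_prod _ _ (fun i _ => by positivity)
    set ψ : Fin d → ℝ → ℝ :=
      fun i t => (1 + |t|) ^ p * ((1 + (|t| + A i)) * (K i * Real.exp (-b * t ^ 2)))
      with hψdef
    set bound : (Fin d → ℝ) → ℝ := fun y => (σ ^ 2)⁻¹ * C * ∏ i, ψ i (y i) with hbounddef
    have hbd : ∀ y : Fin d → ℝ, ∀ x ∈ Metric.ball x₀ 1, ‖F' x y‖ ≤ bound y := by
      intro y x hx
      refine (hF'norm x y).trans ?_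
      have e1 := hGbd y x hx
      have e2 := hfbd y
      have e3 := hsumbd y x hx
      have hsum_nn : (0:ℝ) ≤ ∑ i, |y i - x i| :=
        Finset.sum_nonneg fun i _ => abs_nonneg _
      have step : (σ ^ 2)⁻¹ * (G (y - x) * |f y|) * ∑ i, |y i - x i|
          ≤ (σ ^ 2)⁻¹ * ((∏ i, (K i * Real.exp (-b * (y i) ^ 2)))
              * (C * ∏ i, (1 + |y i|) ^ p)) * ∏ i, (1 + (|y i| + A i)) := by
        have hXY : (σ ^ 2)⁻¹ * (G (y - x) * |f y|)
            ≤ (σ ^ 2)⁻¹ * ((∏ i, (K i * Real.exp (-b * (y i) ^ 2)))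
                * (C * ∏ i, (1 + |y i|) ^ p)) :=
          mul_le_mul_of_nonneg_left
            (mul_le_mul e1 e2 (abs_nonneg _) (hprodKe_nn y))
            (inv_nonneg.mpr hσ2.le)
        refine mul_le_mul hXY e3 hsum_nn ?_
        have : (0:ℝ) ≤ C * ∏ i, (1 + |y i|) ^ p :=
          mul_nonneg hC (Finset.prod_nonneg fun i _ => by positivity)
        exact mul_nonneg (inv_nonneg.mpr hσ2.le) (mul_nonneg (hprodKe_nn y) this)
      refine step.trans (le_of_eq ?_)
      rw [hbounddef]
      show _ = (σ ^ 2)⁻¹ * C * ∏ i, ψ i (y i)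
      rw [hψdef]
      simp only [Finset.prod_mul_distrib]
      ring
    have hψint : ∀ i, Integrable (ψ i) := by
      intro i
      have hcont : Continuous (ψ i) := by
        rw [hψdef]
        have habs : Continuous (fun t : ℝ => |t|) := continuous_abs
        fun_prop
      have hψnn : ∀ t, 0 ≤ ψ i t := by
        intro t
        rw [hψdef]
        have := hK0 i
        have := hA0 i
        positivity
      refine Integrable.mono'
        ((aux_integrable_poly_gauss (p + 1) hb).const_mul ((1 + A i) * K i))
        hcont.aestronglyMeasurable (Filter.Eventually.of_forall fun t => ?_)
      rw [Real.norm_eq_abs, abs_of_nonneg (hψnn t)]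
      have h4 : 1 + (|t| + A i) ≤ (1 + A i) * (1 + |t|) := by
        nlinarith [abs_nonneg t, hA0 i]
      have h5 := mul_le_mul_of_nonneg_left
        (mul_le_mul_of_nonneg_right h4 (mul_nonneg (hK0 i) (Real.exp_pos (-b * t ^ 2)).le))
        (pow_nonneg (by positivity : (0:ℝ) ≤ 1 + |t|) p)
      calc ψ i t ≤ (1 + |t|) ^ p * (((1 + A i) * (1 + |t|)) * (K i * Real.exp (-b * t ^ 2))) := by
            rw [hψdef]; exact h5
        _ = (1 + A i) * K i * ((1 + |t|) ^ (p + 1) * Real.exp (-b * t ^ 2)) := by ring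
    have hbound_int : Integrable bound := by
      rw [hbounddef]
      exact (Integrable.fintype_prod (f := ψ) hψint).const_mul _
    have hΦmeas : ∀ x : Fin d → ℝ,
        AEStronglyMeasurable (fun y => G (y - x) * f y) (volume) :=
      fun x => ((hGmeas.comp (measurable_id.sub measurable_const)).mul hf).aestronglyMeasurable
    have hΦint : Integrable (fun y => G (y - x₀) * f y) (volume) := by
      set φ : Fin d → ℝ → ℝ := fun i t => (1 + |t|) ^ p * (K i * Real.exp (-b * t ^ 2))
        with hφdef
      have hφint : ∀ i, Integrable (φ i) := by
        intro i
        have hcont : Continuous (φ i) := by rw [hφdef]; fun_prop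
        have hφnn : ∀ t, 0 ≤ φ i t := fun t => by
          rw [hφdef]
          have := hK0 i
          positivity
        refine Integrable.mono'
          ((aux_integrable_poly_gauss p hb).const_mul (K i))
          hcont.aestronglyMeasurable (Filter.Eventually.of_forall fun t => ?_)
        rw [Real.norm_eq_abs, abs_of_nonneg (hφnn t)]
        calc φ i t = K i * ((1 + |t|) ^ p * Real.exp (-b * t ^ 2)) := by rw [hφdef]; ring
          _ ≤ K i * ((1 + |t|) ^ p * Real.exp (-b * t ^ 2)) := le_rfl
      refine Integrable.mono' ((Integrable.fintype_prod (f := φ) hφint).const_mul C)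
        (hΦmeas x₀) (Filter.Eventually.of_forall fun y => ?_)
      rw [Real.norm_eq_abs, abs_mul, abs_of_nonneg (hGnn _)]
      have e1 := hGbd y x₀ (Metric.mem_ball_self one_pos)
      have e2 := hfbd y
      calc G (y - x₀) * |f y|
          ≤ (∏ i, (K i * Real.exp (-b * (y i) ^ 2))) * (C * ∏ i, (1 + |y i|) ^ p) :=
            mul_le_mul e1 e2 (abs_nonneg _) (hprodKe_nn y)
        _ = C * ∏ i, φ i (y i) := by
            rw [hφdef]
            simp only [Finset.prod_mul_distrib]
            ring
    have hF'meas : AEStronglyMeasurable (F' x₀) (volume) := by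
      have hsc : Measurable (fun y : Fin d → ℝ => (σ ^ 2)⁻¹ * (G (y - x₀) * f y)) :=
        ((hGmeas.comp (measurable_id.sub measurable_const)).mul hf).const_mul _
      have hDc : Continuous (fun y : Fin d → ℝ => D (y - x₀)) := by
        show Continuous fun y : Fin d → ℝ =>
          ∑ i, (y - x₀) i • (ContinuousLinearMap.proj (R := ℝ) (φ := fun _ : Fin d => ℝ) i)
        exact continuous_finset_sum _ fun i _ =>
          ((continuous_apply i).comp (continuous_id.sub continuous_const)).smul
            continuous_const
      rw [hF'def]
      exact hsc.aestronglyMeasurable.smul hDc.aestronglyMeasurable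
    have hF'int : Integrable (F' x₀) (volume) :=
      hbound_int.mono' hF'meas
        (Filter.Eventually.of_forall fun y => hbd y x₀ (Metric.mem_ball_self one_pos))
    refine ⟨hF'int, ?_⟩
    exact hasFDerivAt_integral_of_dominated_of_fderiv_le (𝕜 := ℝ)
      (F := fun x y => G (y - x) * f y) (F' := F') (bound := bound)
      (Metric.ball_mem_nhds x₀ one_pos) (Filter.Eventually.of_forall fun x => hΦmeas x) hΦint hF'meas
      (Filter.Eventually.of_forall fun y x hx => hbd y x hx)
      hbound_int
      (Filter.Eventually.of_forall fun y x _ => hdiff y x)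
  rw [hueq]
  constructor
  · exact fun x₀ => ((key x₀).2).differentiableAt
  · intro x j
    rw [(key x).2.fderiv, ContinuousLinearMap.integral_apply (key x).1,
      htrans (fun δ => δ j / σ ^ 2 * f (x + δ))]
    have h2 : ∫ δ, G δ * (δ j / σ ^ 2 * f (x + δ)) ∂(volume)
        = ∫ y, G (y - x) * ((y j - x j) / σ ^ 2 * f y) ∂(volume) := by
      rw [← hshift x (fun y => (y j - x j) / σ ^ 2 * f y)]
      refine integral_congr_ae (Filter.Eventually.of_forall fun δ => ?_)
      simp [Pi.add_apply, add_sub_cancel_left]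
    rw [h2]
    refine integral_congr_ae (Filter.Eventually.of_forall fun y => ?_)
    have happ : D (y - x) (Pi.single j 1) = y j - x j := by
      rw [hDapply]
      simp [Pi.single_apply, Pi.sub_apply, mul_ite, Finset.sum_ite_eq']
    rw [hF'def]
    show (((σ ^ 2)⁻¹ * (G (y - x) * f y)) • D (y - x)) (Pi.single j 1) = _
    rw [ContinuousLinearMap.smul_apply, happ, smul_eq_mul]
    field_simp
end

section
/- Fix x ∈ ℝ^d, g ∈ ℝ, K ≥ 1, θ₀ ∈ ℝ, and f : ℝ^d × ℝ → ℝ. Assume: (i) for every θ in a neighborhood U of θ₀, δ ↦ f(x+δ;θ) is square-integrable with respect to γ; (ii) for γ-a.e. δ, θ ↦ f(x+δ;θ) is differentiable on U; (iii) there is h square-integrable with respect to γ such that |∂_θ f(x+δ;θ)| ≤ h(δ) for all θ ∈ U and γ-a.e. δ. Let δ_1,…,δ_K be K mutually independent γ-distributed samples, L⁽⁰⁾(θ) := ((1/K)∑_i f(x+δ_i;θ) − g)², and L_b(θ) := (E_{δ∼γ}[f(x+δ;θ)] − g)². Then E[∂_θ L⁽⁰⁾(θ₀)] = ∂_θ L_b(θ₀)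 + (2/K)·Cov_{δ∼γ}(f(x+δ;θ₀), ∂_θ f(x+δ;θ₀)); i.e., the stochastic gradient of the biased loss deviates from the exact loss gradient by exactly twice the covariance of the value and its θ-derivative, divided by the sample size. -/
open MeasureTheory ProbabilityTheory Real

section Aux

open Function Set

variable {ι : Type*} [Fintype ι]

lemma aux_measurePreserving_eval {α : ι → Type*} [∀ i, MeasurableSpace (α i)]
    (ν : ∀ i, Measure (α i)) [∀ i, IsProbabilityMeasure (ν i)] (i : ι) :
    MeasurePreserving (Function.eval i) (Measure.pi ν) (ν i) := by
  classical
  refine ⟨measurable_pi_apply i, ?_⟩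
  ext s hs
  rw [Measure.map_apply (measurable_pi_apply i) hs, Set.eval_preimage, Measure.pi_pi]
  rw [Finset.prod_eq_single i (fun j _ hj => by simp [Function.update_of_ne hj]) (by simp)]
  simp

lemma aux_measurePreserving_eval_pair {α : Type*} [MeasurableSpace α]
    (ν : Measure α) [IsProbabilityMeasure ν] {i j : ι} (hij : i ≠ j) :
    MeasurePreserving (fun D : ι → α => (D i, D j)) (Measure.pi fun _ => ν) (ν.prod ν) := by
  classical
  have hm : Measurable (fun D : ι → α => (D i, D j)) :=
    (measurable_pi_apply i).prodMk (measurable_pi_apply j)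
  refine ⟨hm, ?_⟩
  refine (Measure.prod_eq (μ := ν) (ν := ν) fun s t hs ht => ?_).symm
  rw [Measure.map_apply hm (hs.prod ht)]
  set S : ι → Set α := Function.update (Function.update (fun _ => univ) i s) j t with hS
  have hpre : (fun D : ι → α => (D i, D j)) ⁻¹' (s ×ˢ t) = Set.pi univ S := by
    ext D
    simp only [mem_preimage, mem_prod, mem_pi, mem_univ, true_implies]
    constructor
    · rintro ⟨h1, h2⟩ k
      rcases eq_or_ne k j with rfl | hkj
      · simpa [hS] using h2
      rcases eq_or_ne k i with rfl | hki
      · simpa [hS, Function.update_of_ne hij] using h1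
      · simp [hS, Function.update_of_ne hkj, Function.update_of_ne hki]
    · intro hD
      have h1 := hD i
      have h2 := hD j
      rw [hS] at h1 h2
      rw [Function.update_of_ne hij, Function.update_self] at h1
      rw [Function.update_self] at h2
      exact ⟨h1, h2⟩
  rw [hpre, Measure.pi_pi]
  have hsub : ({i, j} : Finset ι) ⊆ Finset.univ := Finset.subset_univ _
  rw [← Finset.prod_subset hsub (fun k _ hk => ?_)]
  · rw [Finset.prod_pair hij]
    have h1 : S i = s := by
      rw [hS, Function.update_of_ne hij, Function.update_self]
    have h2 : S j = t := by rw [hS, Function.update_self]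
    rw [h1, h2]
  · have hki : k ≠ i := fun hc => hk (by simp [hc])
    have hkj : k ≠ j := fun hc => hk (by simp [hc])
    simp [hS, Function.update_of_ne hki, Function.update_of_ne hkj]

lemma aux_integral_comp {X Y : Type*} [MeasurableSpace X] [MeasurableSpace Y]
    {μ : Measure X} {ν : Measure Y} {f : X → Y} (hf : MeasurePreserving f μ ν)
    {g : Y → ℝ} (hg : AEStronglyMeasurable g ν) :
    ∫ x, g (f x) ∂μ = ∫ y, g y ∂ν := by
  rw [← hf.map_eq] at hg ⊢
  exact (integral_map hf.measurable.aemeasurable hg).symm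

end Aux

/-- under square-integrability, a.e.-differentiability in θ, and a
square-integrable dominating function for the θ-derivative, the expected stochastic
gradient of the biased loss `L⁽⁰⁾` deviates from the exact loss gradient by exactly
`(2/K)·Cov_{δ∼γ}(f(x+δ;θ₀), ∂_θ f(x+δ;θ₀))`. -/
theorem biased_boundary_loss_gradient
    (d K : ℕ) (hK : 1 ≤ K) (σ : ℝ) (hσ : 0 < σ)
    (f : (Fin d → ℝ) → ℝ → ℝ) (x : Fin d → ℝ) (g : ℝ) (θ₀ : ℝ)
    (U : Set ℝ) (hU : U ∈ nhds θ₀)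
    (hint : ∀ θ ∈ U, MemLp (fun δ => f (x + δ) θ) 2 (rsGaussian d σ))
    (hdiff : ∀ᵐ δ ∂(rsGaussian d σ), DifferentiableOn ℝ (f (x + δ)) U)
    (h : (Fin d → ℝ) → ℝ) (hh : MemLp h 2 (rsGaussian d σ))
    (hbound : ∀ᵐ δ ∂(rsGaussian d σ), ∀ θ ∈ U, |deriv (f (x + δ)) θ| ≤ h δ) :
    ∫ D : Fin K → Fin d → ℝ,
        deriv (fun θ => ((K : ℝ)⁻¹ * ∑ i : Fin K, f (x + D i) θ - g) ^ 2) θ₀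
      ∂(Measure.pi fun _ : Fin K => rsGaussian d σ)
    = deriv (fun θ => ((∫ δ, f (x + δ) θ ∂(rsGaussian d σ)) - g) ^ 2) θ₀
      + 2 / (K : ℝ) *
        ((∫ δ, f (x + δ) θ₀ * deriv (f (x + δ)) θ₀ ∂(rsGaussian d σ))
          - (∫ δ, f (x + δ) θ₀ ∂(rsGaussian d σ))
            * (∫ δ, deriv (f (x + δ)) θ₀ ∂(rsGaussian d σ))) := by
  classical
  set γ := rsGaussian d σ with hγdef
  set μK : Measure (Fin K → Fin d → ℝ) := Measure.pi fun _ : Fin K => γ with hμKdef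
  set a : (Fin d → ℝ) → ℝ := fun δ => f (x + δ) θ₀ with ha_def
  set b : (Fin d → ℝ) → ℝ := fun δ => deriv (f (x + δ)) θ₀ with hb_def
  have hθ₀U : θ₀ ∈ U := mem_of_mem_nhds hU
  obtain ⟨ε, hε, hball⟩ : ∃ ε > 0, Metric.ball θ₀ ε ⊆ U := Metric.mem_nhds_iff.mp hU
  -- a.e. HasDerivAt for every θ in the ball
  have hderivball : ∀ᵐ δ ∂γ, ∀ θ ∈ Metric.ball θ₀ ε,
      HasDerivAt (f (x + δ)) (deriv (f (x + δ)) θ) θ := by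
    filter_upwards [hdiff] with δ hδ θ hθ
    have hnhds : U ∈ nhds θ :=
      Filter.mem_of_superset (Metric.isOpen_ball.mem_nhds hθ) hball
    exact ((hδ θ (hball hθ)).differentiableAt hnhds).hasDerivAt
  -- measurability of b
  have hbmeas : AEStronglyMeasurable b γ := by
    set u : ℕ → ℝ := fun n => θ₀ + ε / 2 * (1 / (n + 1)) with hu_def
    have hupos : ∀ n : ℕ, (0:ℝ) < ε / 2 * (1 / (n + 1)) := by
      intro n; positivity
    have huball : ∀ n : ℕ, u n ∈ Metric.ball θ₀ ε := by
      intro n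
      have h1 : ε / 2 * (1 / ((n:ℝ) + 1)) ≤ ε / 2 * 1 := by
        apply mul_le_mul_of_nonneg_left _ (by positivity)
        rw [div_le_one (by positivity)]
        simp
      simp only [hu_def, Metric.mem_ball, Real.dist_eq, add_sub_cancel_left]
      rw [abs_of_pos (hupos n)]
      nlinarith
    have hmeasn : ∀ n : ℕ, AEStronglyMeasurable
        (fun δ => (u n - θ₀)⁻¹ * (f (x + δ) (u n) - f (x + δ) θ₀)) γ := by
      intro n
      exact (((hint (u n) (hball (huball n))).aestronglyMeasurable.sub
        (hint θ₀ hθ₀U).aestronglyMeasurable).const_mul _)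
    apply aestronglyMeasurable_of_tendsto_ae Filter.atTop hmeasn
    filter_upwards [hderivball] with δ hδ
    have hd : HasDerivAt (f (x + δ)) (b δ) θ₀ := hδ θ₀ (Metric.mem_ball_self hε)
    have htendsto : Filter.Tendsto u Filter.atTop (nhdsWithin θ₀ {θ₀}ᶜ) := by
      apply tendsto_nhdsWithin_of_tendsto_nhds_of_eventually_within
      · have : Filter.Tendsto (fun n : ℕ => ε / 2 * (1 / ((n:ℝ) + 1))) Filter.atTop (nhds 0) := by
          simpa using tendsto_one_div_add_atTop_nhds_zero_nat.const_mul (ε / 2)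
        simpa [hu_def] using tendsto_const_nhds.add this
      · filter_upwards with n
        simp only [Set.mem_compl_iff, Set.mem_singleton_iff, hu_def]
        intro hc
        nlinarith [hupos n, hc]
    have hslope := (hasDerivAt_iff_tendsto_slope.mp hd).comp htendsto
    refine hslope.congr fun n => ?_
    simp only [Function.comp_apply, slope_def_field]
    rw [div_eq_inv_mul]
  -- differentiation under the integral sign
  have key := hasDerivAt_integral_of_dominated_loc_of_deriv_le (μ := γ)
      (F := fun θ δ => f (x + δ) θ) (F' := fun θ δ => deriv (f (x + δ)) θ)
      (bound := h) (x₀ := θ₀) (Metric.ball_mem_nhds θ₀ hε)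
      (Filter.eventually_of_mem hU fun θ hθ => (hint θ hθ).aestronglyMeasurable)
      ((hint θ₀ hθ₀U).integrable one_le_two)
      hbmeas
      (by filter_upwards [hbound] with δ hδ θ hθ
          simpa [Real.norm_eq_abs] using hδ θ (hball hθ))
      (hh.integrable one_le_two)
      hderivball
  obtain ⟨hbint, hderivInt⟩ := key
  have hbL2 : MemLp b 2 γ := by
    refine hh.of_le hbmeas ?_
    filter_upwards [hbound] with δ hδ
    calc ‖b δ‖ = |b δ| := rfl
      _ ≤ h δ := hδ θ₀ hθ₀U
      _ ≤ ‖h δ‖ := le_abs_self _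
  have haL2 : MemLp a 2 γ := hint θ₀ hθ₀U
  have haint : Integrable a γ := haL2.integrable one_le_two
  have habint : Integrable (fun δ => a δ * b δ) γ := by
    have hmem : MemLp (a • b) 1 γ := hbL2.smul haL2 (hpqr := ⟨by simp only [inv_one]; exact ENNReal.inv_two_add_inv_two⟩)
    exact memLp_one_iff_integrable.mp hmem
  set A : ℝ := ∫ δ, a δ ∂γ with hA_def
  set B : ℝ := ∫ δ, b δ ∂γ with hB_def
  set P : ℝ := ∫ δ, a δ * b δ ∂γ with hP_def
  -- the exact-loss derivative
  have hd1 : deriv (fun θ => ((∫ δ, f (x + δ) θ ∂γ) - g) ^ 2) θ₀ = 2 * (A - g) * B := by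
    have h2 := HasDerivAt.deriv (f := fun θ => ((∫ δ, f (x + δ) θ ∂γ) - g) ^ 2) ((hderivInt.sub_const g).pow 2)
    rw [h2]
    push_cast
    ring
  -- transfer a.e. properties to the product measure
  have haeeval : ∀ (p : (Fin d → ℝ) → Prop), (∀ᵐ δ ∂γ, p δ) → ∀ (i : Fin K),
      ∀ᵐ D ∂μK, p (D i) := by
    intro p hp i
    rw [ae_iff] at hp ⊢
    show (Measure.pi fun _ : Fin K => γ) (Function.eval i ⁻¹' {δ | ¬ p δ}) = 0
    exact Measure.pi_eval_preimage_null (μ := fun _ : Fin K => γ) hp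
  -- pointwise derivative of the sample loss
  have hintegrand : ∀ᵐ D ∂μK,
      deriv (fun θ => ((K : ℝ)⁻¹ * ∑ i : Fin K, f (x + D i) θ - g) ^ 2) θ₀
      = 2 * ((K:ℝ)⁻¹ * ∑ i : Fin K, a (D i) - g) * ((K:ℝ)⁻¹ * ∑ i : Fin K, b (D i)) := by
    have hae : ∀ᵐ D ∂μK, ∀ i : Fin K, HasDerivAt (f (x + D i)) (b (D i)) θ₀ := by
      rw [ae_all_iff]
      intro i
      exact haeeval _ (hderivball.mono fun δ hδ => hδ θ₀ (Metric.mem_ball_self hε)) i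
    filter_upwards [hae] with D hD
    have hsum : HasDerivAt (fun θ => (K:ℝ)⁻¹ * ∑ i : Fin K, f (x + D i) θ - g)
        ((K:ℝ)⁻¹ * ∑ i : Fin K, b (D i)) θ₀ := by
      have hs := HasDerivAt.fun_sum (u := Finset.univ)
        (A := fun (i : Fin K) θ => f (x + D i) θ) (A' := fun i => b (D i))
        (fun i _ => hD i)
      exact (hs.const_mul ((K:ℝ)⁻¹)).sub_const g
    rw [HasDerivAt.deriv (f := fun θ => ((K : ℝ)⁻¹ * ∑ i : Fin K, f (x + D i) θ - g) ^ 2) (hsum.pow 2)]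
    push_cast
    ring
  rw [integral_congr_ae hintegrand]
  -- integrability over the product measure
  have hMPe : ∀ i : Fin K, MeasurePreserving (Function.eval i) μK γ :=
    fun i => aux_measurePreserving_eval (fun _ : Fin K => γ) i
  have hbi : ∀ i : Fin K, Integrable (fun D : Fin K → Fin d → ℝ => b (D i)) μK :=
    fun i => ((hMPe i).integrable_comp hbmeas).mpr hbint
  have hprod_int : ∀ i j : Fin K, Integrable (fun D : Fin K → Fin d → ℝ => a (D i) * b (D j)) μK := by
    intro i j
    rcases eq_or_ne i j with rfl | hij
    · exact ((hMPe i).integrable_comp habint.aestronglyMeasurable).mpr habint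
    · have hab : Integrable (fun p : (Fin d → ℝ) × (Fin d → ℝ) => a p.1 * b p.2) (γ.prod γ) :=
        haint.mul_prod hbint
      exact (((aux_measurePreserving_eval_pair γ hij)).integrable_comp
        hab.aestronglyMeasurable).mpr hab
  have hprod_val : ∀ i j : Fin K, ∫ D, a (D i) * b (D j) ∂μK = if i = j then P else A * B := by
    intro i j
    rcases eq_or_ne i j with rfl | hij
    · simp only [if_pos rfl]
      exact aux_integral_comp (hMPe i) habint.aestronglyMeasurable
    · rw [if_neg hij]
      have := aux_integral_comp (aux_measurePreserving_eval_pair (ι := Fin K) γ hij)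
        (haint.mul_prod hbint).aestronglyMeasurable
      rw [this]
      exact integral_prod_mul a b
  have hbi_val : ∀ i : Fin K, ∫ D, b (D i) ∂μK = B :=
    fun i => aux_integral_comp (hMPe i) hbmeas
  -- expand the integrand
  have hSb_int : Integrable (fun D : Fin K → Fin d → ℝ => ∑ i : Fin K, b (D i)) μK :=
    integrable_finset_sum _ fun i _ => hbi i
  have hexp : (fun D : Fin K → Fin d → ℝ =>
      (∑ i : Fin K, a (D i)) * (∑ j : Fin K, b (D j)))
      = fun D => ∑ i : Fin K, ∑ j : Fin K, a (D i) * b (D j) := by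
    funext D
    rw [Finset.sum_mul_sum]
  have hSaSb_int : Integrable (fun D : Fin K → Fin d → ℝ =>
      (∑ i : Fin K, a (D i)) * (∑ j : Fin K, b (D j))) μK := by
    rw [hexp]
    exact integrable_finset_sum _ fun i _ =>
      integrable_finset_sum _ fun j _ => hprod_int i j
  -- split the integral
  have hsplit : (fun D : Fin K → Fin d → ℝ =>
      2 * ((K:ℝ)⁻¹ * ∑ i : Fin K, a (D i) - g) * ((K:ℝ)⁻¹ * ∑ i : Fin K, b (D i)))
      = fun D => 2 * (K:ℝ)⁻¹ * (K:ℝ)⁻¹ *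
          ((∑ i : Fin K, a (D i)) * (∑ j : Fin K, b (D j)))
        + (-(2 * g * (K:ℝ)⁻¹)) * (∑ i : Fin K, b (D i)) := by
    funext D
    ring
  rw [hsplit, integral_add (hSaSb_int.const_mul _) (hSb_int.const_mul _),
    integral_const_mul, integral_const_mul]
  -- compute the two integrals
  have hI1 : ∫ D, (∑ i : Fin K, a (D i)) * (∑ j : Fin K, b (D j)) ∂μK
      = (K:ℝ) * ((K:ℝ) * (A * B) + (P - A * B)) := by
    rw [hexp, integral_finset_sum _ (fun i _ =>
      integrable_finset_sum _ fun j _ => hprod_int i j)]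
    have : ∀ i : Fin K, ∫ D, ∑ j : Fin K, a (D i) * b (D j) ∂μK
        = (K:ℝ) * (A * B) + (P - A * B) := by
      intro i
      rw [integral_finset_sum _ fun j _ => hprod_int i j]
      have : ∀ j : Fin K, ∫ D, a (D i) * b (D j) ∂μK
          = A * B + if i = j then P - A * B else 0 := by
        intro j
        rw [hprod_val i j]
        rcases eq_or_ne i j with rfl | hij
        · simp
        · simp [hij]
      simp_rw [this]
      rw [Finset.sum_add_distrib, Finset.sum_const, Finset.sum_ite_eq]
      simp [mul_comm]
    simp_rw [this]
    rw [Finset.sum_const]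
    simp only [Finset.card_univ, Fintype.card_fin, nsmul_eq_mul]
  have hI2 : ∫ D, ∑ i : Fin K, b (D i) ∂μK = (K:ℝ) * B := by
    rw [integral_finset_sum _ fun i _ => hbi i]
    simp_rw [hbi_val]
    rw [Finset.sum_const]
    simp [mul_comm]
  rw [hI1, hI2, hd1]
  have hKne : (K:ℝ) ≠ 0 := by
    have : (0:ℕ) < K := hK
    positivity
  field_simp
  ring
end

section
/- Fix x ∈ ℝ^d, g ∈ ℝ, K ≥ 1, and assume δ ↦ (1+‖δ‖)·|f(x+δ)| is integrable with respect to γ. Let δ⁽¹⁾,…,δ⁽⁴⁾ be four groups, each of K γ-distributed samples, with all 4K samples mutually independent. Set û(δ⁽ʲ⁾) := (1/K)∑_{i=1}^K f(x+δ⁽ʲ⁾_i) and v̂(δ⁽ʲ⁾) := ∑_{m=1}^d [(1/K)∑_{i=1}^K (δ⁽ʲ⁾_i/σ²) f(x+δ⁽ʲ⁾_i)]_m. Then the fully debiased viscous Burgers residual loss L⁽²⁾ := (û(δ⁽¹⁾)·v̂(δ⁽²⁾) − g)·(û(δ⁽³⁾)·v̂(δ⁽⁴⁾) − g) satisfies E[L⁽²⁾]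 = (u·v − g)², where u := E_{δ∼γ}[f(x+δ)] and v := ∑_{m=1}^d (E_{δ∼γ}[(δ/σ²) f(x+δ)])_m. -/
open MeasureTheory ProbabilityTheory Real

lemma aux_pi_prod {ι Y : Type*} [Fintype ι] [DecidableEq ι] [MeasurableSpace Y]
    (μ : Measure Y) [IsProbabilityMeasure μ] {n : ℕ} (e : Fin n → ι)
    (he : Function.Injective e) (p : Fin n → Y → ℝ) (hp : ∀ k, Integrable (p k) μ) :
    Integrable (fun D : ι → Y => ∏ k, p k (D (e k))) (Measure.pi fun _ => μ) ∧
      ∫ D : ι → Y, ∏ k, p k (D (e k)) ∂(Measure.pi fun _ => μ) = ∏ k, ∫ y, p k y ∂μ := by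
  classical
  letI : MeasureSpace Y := ⟨μ⟩
  haveI : SigmaFinite (volume : Measure Y) := by
    show SigmaFinite μ; infer_instance
  set ψ : ι → Y → ℝ := fun c => if h : ∃ k, e k = c then p h.choose else fun _ => (1:ℝ) with hψdef
  have hψe : ∀ k, ψ (e k) = p k := by
    intro k
    have h : ∃ k', e k' = e k := ⟨k, rfl⟩
    simp only [hψdef, dif_pos h]
    exact congrArg p (he h.choose_spec)
  have hψ1 : ∀ c, (¬ ∃ k, e k = c) → ψ c = fun _ => (1:ℝ) := by
    intro c h; simp only [hψdef, dif_neg h]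
  have hψint : ∀ c, Integrable (ψ c) μ := by
    intro c
    by_cases h : ∃ k, e k = c
    · simpa only [hψdef, dif_pos h] using hp h.choose
    · rw [hψ1 c h]; exact integrable_const 1
  have himg : ∀ (F : ι → ℝ), (∀ c, (¬ ∃ k, e k = c) → F c = 1) → ∏ c, F c = ∏ k, F (e k) := by
    intro F hF
    rw [← Finset.prod_image (s := Finset.univ) (g := e) (f := F)
      (fun a _ b _ hab => he hab)]
    refine (Finset.prod_subset (Finset.subset_univ _) ?_).symm
    intro c _ hc
    refine hF c fun ⟨k, hk⟩ => hc (Finset.mem_image.mpr ⟨k, Finset.mem_univ _, hk⟩)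
  have h2 : (fun D : ι → Y => ∏ c, ψ c (D c)) = fun D => ∏ k, p k (D (e k)) := by
    funext D
    rw [himg (fun c => ψ c (D c)) (fun c hc => by show ψ c (D c) = 1; rw [hψ1 c hc])]
    exact Finset.prod_congr rfl fun k _ => by rw [hψe]
  constructor
  · have h1 : Integrable (fun D : ι → Y => ∏ c, ψ c (D c)) (Measure.pi fun _ => μ) :=
      Integrable.fintype_prod hψint
    rwa [h2] at h1
  · calc ∫ D : ι → Y, ∏ k, p k (D (e k)) ∂(Measure.pi fun _ => μ)
        = ∫ D : ι → Y, ∏ c, ψ c (D c) ∂(Measure.pi fun _ => μ) := by rw [h2]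
      _ = ∏ c, ∫ y, ψ c y ∂μ := integral_fintype_prod_eq_prod ψ
      _ = ∏ k, ∫ y, ψ (e k) y ∂μ := himg (fun c => ∫ y, ψ c y ∂μ)
          (fun c hc => by show (∫ y, ψ c y ∂μ) = 1; rw [hψ1 c hc]; simp)
      _ = ∏ k, ∫ y, p k y ∂μ := Finset.prod_congr rfl fun k _ => by rw [hψe]

lemma aux2 {ι Y : Type*} [Fintype ι] [DecidableEq ι] [MeasurableSpace Y]
    (μ : Measure Y) [IsProbabilityMeasure μ] (c1 c2 : ι) (h12 : c1 ≠ c2)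
    (p1 p2 : Y → ℝ) (hp1 : Integrable p1 μ) (hp2 : Integrable p2 μ) :
    Integrable (fun D : ι → Y => p1 (D c1) * p2 (D c2)) (Measure.pi fun _ => μ) ∧
      ∫ D : ι → Y, p1 (D c1) * p2 (D c2) ∂(Measure.pi fun _ => μ)
        = (∫ y, p1 y ∂μ) * (∫ y, p2 y ∂μ) := by
  have he : Function.Injective ![c1, c2] := by
    intro a b hab
    fin_cases a <;> fin_cases b <;> simp_all
  have hp : ∀ k, Integrable (![p1, p2] k) μ := by
    intro k; fin_cases k <;> simpa
  have H := aux_pi_prod μ ![c1, c2] he ![p1, p2] hp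
  simpa [Fin.prod_univ_two] using H

lemma aux4 {ι Y : Type*} [Fintype ι] [DecidableEq ι] [MeasurableSpace Y]
    (μ : Measure Y) [IsProbabilityMeasure μ] (c1 c2 c3 c4 : ι)
    (h12 : c1 ≠ c2) (h13 : c1 ≠ c3) (h14 : c1 ≠ c4)
    (h23 : c2 ≠ c3) (h24 : c2 ≠ c4) (h34 : c3 ≠ c4)
    (p1 p2 p3 p4 : Y → ℝ) (hp1 : Integrable p1 μ) (hp2 : Integrable p2 μ)
    (hp3 : Integrable p3 μ) (hp4 : Integrable p4 μ) :
    Integrable (fun D : ι → Y => p1 (D c1) * p2 (D c2) * p3 (D c3) * p4 (D c4))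
      (Measure.pi fun _ => μ) ∧
      ∫ D : ι → Y, p1 (D c1) * p2 (D c2) * p3 (D c3) * p4 (D c4) ∂(Measure.pi fun _ => μ)
        = (∫ y, p1 y ∂μ) * (∫ y, p2 y ∂μ) * (∫ y, p3 y ∂μ) * (∫ y, p4 y ∂μ) := by
  have he : Function.Injective ![c1, c2, c3, c4] := by
    intro a b hab
    fin_cases a <;> fin_cases b <;> simp_all
  have hp : ∀ k, Integrable (![p1, p2, p3, p4] k) μ := by
    intro k; fin_cases k <;> simpa
  have H := aux_pi_prod μ ![c1, c2, c3, c4] he ![p1, p2, p3, p4] hp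
  simpa [Fin.prod_univ_four] using H
lemma sum_mul_expand2 {β : Type*} (s : Finset β) (c : ℝ) (p q : β → ℝ) :
    (c * ∑ i ∈ s, p i) * (c * ∑ i ∈ s, q i)
      = ∑ i1 ∈ s, ∑ i2 ∈ s, c ^ 2 * (p i2 * q i1) := by
  simp only [Finset.mul_sum, Finset.sum_mul]
  refine Finset.sum_congr rfl fun i1 _ => Finset.sum_congr rfl fun i2 _ => by ring

lemma sum_mul_expand4 {β : Type*} (s : Finset β) (c : ℝ) (p q r t : β → ℝ) :
    (c * ∑ i ∈ s, p i) * (c * ∑ i ∈ s, q i) * ((c * ∑ i ∈ s, r i) * (c * ∑ i ∈ s, t i))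
      = ∑ i1 ∈ s, ∑ i2 ∈ s, ∑ i3 ∈ s, ∑ i4 ∈ s, c ^ 4 * (p i4 * q i3 * r i2 * t i1) := by
  simp only [Finset.mul_sum, Finset.sum_mul]
  refine Finset.sum_congr rfl fun i1 _ => Finset.sum_congr rfl fun i2 _ =>
    Finset.sum_congr rfl fun i3 _ => Finset.sum_congr rfl fun i4 _ => by ring

lemma integral_double_sum {W α : Type*} [Fintype α] [MeasurableSpace W] {M : Measure W}
    {F : α → α → W → ℝ} {r : ℝ}
    (hF : ∀ a b, Integrable (F a b) M) (hv : ∀ a b, ∫ w, F a b w ∂M = r) :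
    Integrable (fun w => ∑ a, ∑ b, F a b w) M ∧
      ∫ w, (∑ a, ∑ b, F a b w) ∂M = (Fintype.card α : ℝ) ^ 2 * r := by
  have h1 : ∀ a, Integrable (fun w => ∑ b, F a b w) M :=
    fun a => integrable_finset_sum _ fun b _ => hF a b
  refine ⟨integrable_finset_sum _ fun a _ => h1 a, ?_⟩
  rw [integral_finset_sum _ fun a _ => h1 a]
  have : ∀ a : α, ∫ w, (∑ b, F a b w) ∂M = (Fintype.card α : ℝ) * r := by
    intro a
    rw [integral_finset_sum _ fun b _ => hF a b]
    simp [hv a, Finset.sum_const, Finset.card_univ, nsmul_eq_mul]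
  simp [this, Finset.sum_const, Finset.card_univ, nsmul_eq_mul]
  ring

lemma integral_quad_sum {W α : Type*} [Fintype α] [MeasurableSpace W] {M : Measure W}
    {F : α → α → α → α → W → ℝ} {r : ℝ}
    (hF : ∀ a b c e, Integrable (F a b c e) M)
    (hv : ∀ a b c e, ∫ w, F a b c e w ∂M = r) :
    Integrable (fun w => ∑ a, ∑ b, ∑ c, ∑ e, F a b c e w) M ∧
      ∫ w, (∑ a, ∑ b, ∑ c, ∑ e, F a b c e w) ∂M = (Fintype.card α : ℝ) ^ 4 * r := by
  have H2 : ∀ a b, Integrable (fun w => ∑ c, ∑ e, F a b c e w) M ∧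
      ∫ w, (∑ c, ∑ e, F a b c e w) ∂M = (Fintype.card α : ℝ) ^ 2 * r :=
    fun a b => integral_double_sum (fun c e => hF a b c e) (fun c e => hv a b c e)
  have H := integral_double_sum (F := fun a b w => ∑ c, ∑ e, F a b c e w)
    (fun a b => (H2 a b).1) (fun a b => (H2 a b).2)
  refine ⟨H.1, ?_⟩
  rw [H.2]; ring

/-- the fully debiased viscous Burgers residual loss `L⁽²⁾`, built from
four mutually independent groups `D (j, ·)` of `K` i.i.d. `γ`-samples with
`û(δ⁽ʲ⁾) = (1/K)∑ᵢ f(x+δ⁽ʲ⁾ᵢ)` and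
`v̂(δ⁽ʲ⁾) = ∑ₘ [(1/K)∑ᵢ (δ⁽ʲ⁾ᵢ/σ²) f(x+δ⁽ʲ⁾ᵢ)]ₘ`, satisfies
`E[(û(δ⁽¹⁾)v̂(δ⁽²⁾) − g)(û(δ⁽³⁾)v̂(δ⁽⁴⁾) − g)] = (u·v − g)²` where
`u = E_{δ∼γ}[f(x+δ)]` and `v = ∑ₘ (E_{δ∼γ}[(δ/σ²) f(x+δ)])ₘ`. -/
theorem unbiased_burgers_residual_loss
    (d K : ℕ) (hK : 1 ≤ K) (σ : ℝ) (hσ : 0 < σ)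
    (f : (Fin d → ℝ) → ℝ) (hf : Measurable f)
    (x : Fin d → ℝ) (g : ℝ)
    (hint : Integrable (fun δ => (1 + Real.sqrt (∑ i, δ i ^ 2)) * |f (x + δ)|)
      (rsGaussian d σ)) :
    ∫ D : Fin 4 × Fin K → Fin d → ℝ,
        (((K : ℝ)⁻¹ * ∑ i : Fin K, f (x + D (0, i))) *
          (∑ m : Fin d, (K : ℝ)⁻¹ * ∑ i : Fin K, D (1, i) m / σ ^ 2 * f (x + D (1, i))) - g) *
        (((K : ℝ)⁻¹ * ∑ i : Fin K, f (x + D (2, i))) *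
          (∑ m : Fin d, (K : ℝ)⁻¹ * ∑ i : Fin K, D (3, i) m / σ ^ 2 * f (x + D (3, i))) - g)
      ∂(Measure.pi fun _ : Fin 4 × Fin K => rsGaussian d σ)
    = ((∫ δ, f (x + δ) ∂(rsGaussian d σ)) *
        (∑ m : Fin d, ∫ δ, δ m / σ ^ 2 * f (x + δ) ∂(rsGaussian d σ)) - g) ^ 2 := by
    classical
  have hKpos : (0:ℝ) < (K:ℝ) := by exact_mod_cast Nat.lt_of_lt_of_le Nat.zero_lt_one hK
  have hKne : (K:ℝ) ≠ 0 := ne_of_gt hKpos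
  set γ := rsGaussian d σ with hγdef
  set P : (Fin d → ℝ) → ℝ := fun y => f (x + y) with hPdef
  set Q : (Fin d → ℝ) → ℝ := fun y => ∑ m : Fin d, y m / σ ^ 2 * f (x + y) with hQdef
  have hPy : ∀ y : Fin d → ℝ, f (x + y) = P y := fun _ => rfl
  have hPmeas : Measurable P := by rw [hPdef]; exact hf.comp (measurable_id.const_add x)
  have hP : Integrable P γ := by
    refine hint.mono hPmeas.aestronglyMeasurable (Filter.Eventually.of_forall fun y => ?_)
    have h0 : (0:ℝ) ≤ Real.sqrt (∑ i, y i ^ 2) := Real.sqrt_nonneg _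
    simp only [hPdef, Real.norm_eq_abs, abs_mul, abs_abs]
    rw [abs_of_nonneg (by linarith : (0:ℝ) ≤ 1 + Real.sqrt (∑ i, y i ^ 2))]
    nlinarith [abs_nonneg (f (x + y))]
  have hQm : ∀ m : Fin d, Integrable (fun y : Fin d → ℝ => y m / σ ^ 2 * f (x + y)) γ := by
    intro m
    have hmeas : Measurable fun y : Fin d → ℝ => y m / σ ^ 2 * f (x + y) :=
      ((measurable_pi_apply m).div_const _).mul (hf.comp (measurable_id.const_add x))
    refine (hint.const_mul ((σ ^ 2)⁻¹)).mono hmeas.aestronglyMeasurable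
      (Filter.Eventually.of_forall fun y => ?_)
    have h0 : (0:ℝ) ≤ Real.sqrt (∑ i, y i ^ 2) := Real.sqrt_nonneg _
    have hσ2 : (0:ℝ) < σ ^ 2 := by positivity
    have hym : |y m| ≤ Real.sqrt (∑ i, y i ^ 2) := by
      rw [← Real.sqrt_sq_eq_abs]
      exact Real.sqrt_le_sqrt (Finset.single_le_sum (f := fun i => y i ^ 2)
        (fun i _ => sq_nonneg (y i)) (Finset.mem_univ m))
    have h1 : |y m| ≤ 1 + Real.sqrt (∑ i, y i ^ 2) := by linarith
    simp only [Real.norm_eq_abs, abs_mul, abs_div, abs_abs]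
    rw [abs_of_pos hσ2, abs_of_nonneg (by positivity : (0:ℝ) ≤ (σ ^ 2)⁻¹),
      abs_of_nonneg (by linarith : (0:ℝ) ≤ 1 + Real.sqrt (∑ i, y i ^ 2)), div_eq_mul_inv]
    calc |y m| * (σ ^ 2)⁻¹ * |f (x + y)| = (σ ^ 2)⁻¹ * (|y m| * |f (x + y)|) := by ring
      _ ≤ (σ ^ 2)⁻¹ * ((1 + Real.sqrt (∑ i, y i ^ 2)) * |f (x + y)|) := by gcongr
  have hQ : Integrable Q γ := by
    rw [hQdef]; exact integrable_finset_sum _ fun m _ => hQm m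
  have hvq : (∑ m : Fin d, ∫ δ, δ m / σ ^ 2 * P δ ∂γ) = ∫ y, Q y ∂γ := by
    rw [hQdef]
    exact (integral_finset_sum _ fun m _ => hQm m).symm
  -- abbreviate the product measure
  have key4 : ∀ i1 i2 i3 i4 : Fin K,
      Integrable (fun D : Fin 4 × Fin K → Fin d → ℝ =>
        P (D (0, i1)) * Q (D (1, i2)) * P (D (2, i3)) * Q (D (3, i4)))
        (Measure.pi fun _ : Fin 4 × Fin K => γ) ∧
      ∫ D : Fin 4 × Fin K → Fin d → ℝ,
        P (D (0, i1)) * Q (D (1, i2)) * P (D (2, i3)) * Q (D (3, i4))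
        ∂(Measure.pi fun _ : Fin 4 × Fin K => γ)
        = (∫ y, P y ∂γ) * (∫ y, Q y ∂γ) * (∫ y, P y ∂γ) * (∫ y, Q y ∂γ) := by
    intro i1 i2 i3 i4
    exact aux4 γ ((0 : Fin 4), i1) ((1 : Fin 4), i2) ((2 : Fin 4), i3) ((3 : Fin 4), i4)
      (fun h => absurd (congrArg Prod.fst h) (show ¬(0:Fin 4) = 1 by decide))
      (fun h => absurd (congrArg Prod.fst h) (show ¬(0:Fin 4) = 2 by decide))
      (fun h => absurd (congrArg Prod.fst h) (show ¬(0:Fin 4) = 3 by decide))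
      (fun h => absurd (congrArg Prod.fst h) (show ¬(1:Fin 4) = 2 by decide))
      (fun h => absurd (congrArg Prod.fst h) (show ¬(1:Fin 4) = 3 by decide))
      (fun h => absurd (congrArg Prod.fst h) (show ¬(2:Fin 4) = 3 by decide))
      P Q P Q hP hQ hP hQ
  have key2a : ∀ i1 i2 : Fin K,
      Integrable (fun D : Fin 4 × Fin K → Fin d → ℝ => P (D (0, i1)) * Q (D (1, i2)))
        (Measure.pi fun _ : Fin 4 × Fin K => γ) ∧
      ∫ D : Fin 4 × Fin K → Fin d → ℝ, P (D (0, i1)) * Q (D (1, i2))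
        ∂(Measure.pi fun _ : Fin 4 × Fin K => γ) = (∫ y, P y ∂γ) * (∫ y, Q y ∂γ) :=
    fun i1 i2 => aux2 γ ((0 : Fin 4), i1) ((1 : Fin 4), i2)
      (fun h => absurd (congrArg Prod.fst h) (show ¬(0:Fin 4) = 1 by decide)) P Q hP hQ
  have key2b : ∀ i1 i2 : Fin K,
      Integrable (fun D : Fin 4 × Fin K → Fin d → ℝ => P (D (2, i1)) * Q (D (3, i2)))
        (Measure.pi fun _ : Fin 4 × Fin K => γ) ∧
      ∫ D : Fin 4 × Fin K → Fin d → ℝ, P (D (2, i1)) * Q (D (3, i2))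
        ∂(Measure.pi fun _ : Fin 4 × Fin K => γ) = (∫ y, P y ∂γ) * (∫ y, Q y ∂γ) :=
    fun i1 i2 => aux2 γ ((2 : Fin 4), i1) ((3 : Fin 4), i2)
      (fun h => absurd (congrArg Prod.fst h) (show ¬(2:Fin 4) = 3 by decide)) P Q hP hQ
  have Hquad := integral_quad_sum (M := Measure.pi fun _ : Fin 4 × Fin K => γ)
    (F := fun a b c e D => ((K:ℝ)⁻¹) ^ 4 *
      (P (D (0, e)) * Q (D (1, c)) * P (D (2, b)) * Q (D (3, a))))
    (fun a b c e => (key4 e c b a).1.const_mul _)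
    (fun a b c e => by rw [integral_const_mul, (key4 e c b a).2])
  have HAB := integral_double_sum (M := Measure.pi fun _ : Fin 4 × Fin K => γ)
    (F := fun a b D => ((K:ℝ)⁻¹) ^ 2 * (P (D (0, b)) * Q (D (1, a))))
    (fun a b => (key2a b a).1.const_mul _)
    (fun a b => by rw [integral_const_mul, (key2a b a).2])
  have HCE := integral_double_sum (M := Measure.pi fun _ : Fin 4 × Fin K => γ)
    (F := fun a b D => ((K:ℝ)⁻¹) ^ 2 * (P (D (2, b)) * Q (D (3, a))))
    (fun a b => (key2b b a).1.const_mul _)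
    (fun a b => by rw [integral_const_mul, (key2b b a).2])
  simp only [hPy]
  have hswap : ∀ (D : Fin 4 × Fin K → Fin d → ℝ) (j : Fin 4),
      (∑ m : Fin d, (K:ℝ)⁻¹ * ∑ i : Fin K, D (j, i) m / σ ^ 2 * P (D (j, i)))
        = (K:ℝ)⁻¹ * ∑ i : Fin K, Q (D (j, i)) := by
    intro D j
    rw [← Finset.mul_sum, Finset.sum_comm]
  have heq : (fun D : Fin 4 × Fin K → Fin d → ℝ =>
      (((K : ℝ)⁻¹ * ∑ i : Fin K, P (D (0, i))) *
        (∑ m : Fin d, (K : ℝ)⁻¹ * ∑ i : Fin K, D (1, i) m / σ ^ 2 * P (D (1, i))) - g) *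
      (((K : ℝ)⁻¹ * ∑ i : Fin K, P (D (2, i))) *
        (∑ m : Fin d, (K : ℝ)⁻¹ * ∑ i : Fin K, D (3, i) m / σ ^ 2 * P (D (3, i))) - g))
      = fun D =>
      (∑ i1 : Fin K, ∑ i2 : Fin K, ∑ i3 : Fin K, ∑ i4 : Fin K, ((K:ℝ)⁻¹) ^ 4 *
        (P (D (0, i4)) * Q (D (1, i3)) * P (D (2, i2)) * Q (D (3, i1))))
      - g * (∑ i1 : Fin K, ∑ i2 : Fin K, ((K:ℝ)⁻¹) ^ 2 * (P (D (0, i2)) * Q (D (1, i1))))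
      - g * (∑ i1 : Fin K, ∑ i2 : Fin K, ((K:ℝ)⁻¹) ^ 2 * (P (D (2, i2)) * Q (D (3, i1))))
      + g * g := by
    funext D
    rw [hswap D 1, hswap D 3,
      ← sum_mul_expand4 Finset.univ ((K:ℝ)⁻¹) (fun i => P (D (0, i))) (fun i => Q (D (1, i)))
        (fun i => P (D (2, i))) (fun i => Q (D (3, i))),
      ← sum_mul_expand2 Finset.univ ((K:ℝ)⁻¹) (fun i => P (D (0, i))) (fun i => Q (D (1, i))),
      ← sum_mul_expand2 Finset.univ ((K:ℝ)⁻¹) (fun i => P (D (2, i))) (fun i => Q (D (3, i)))]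
    ring
  rw [heq]
  have I1 : Integrable (fun D : Fin 4 × Fin K → Fin d → ℝ =>
      ∑ i1 : Fin K, ∑ i2 : Fin K, ∑ i3 : Fin K, ∑ i4 : Fin K, ((K:ℝ)⁻¹) ^ 4 *
        (P (D (0, i4)) * Q (D (1, i3)) * P (D (2, i2)) * Q (D (3, i1))))
      (Measure.pi fun _ : Fin 4 × Fin K => γ) := Hquad.1
  have IAB : Integrable (fun D : Fin 4 × Fin K → Fin d → ℝ =>
      ∑ i1 : Fin K, ∑ i2 : Fin K, ((K:ℝ)⁻¹) ^ 2 * (P (D (0, i2)) * Q (D (1, i1))))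
      (Measure.pi fun _ : Fin 4 × Fin K => γ) := HAB.1
  have ICE : Integrable (fun D : Fin 4 × Fin K → Fin d → ℝ =>
      ∑ i1 : Fin K, ∑ i2 : Fin K, ((K:ℝ)⁻¹) ^ 2 * (P (D (2, i2)) * Q (D (3, i1))))
      (Measure.pi fun _ : Fin 4 × Fin K => γ) := HCE.1
  have V1 : ∫ D : Fin 4 × Fin K → Fin d → ℝ,
      (∑ i1 : Fin K, ∑ i2 : Fin K, ∑ i3 : Fin K, ∑ i4 : Fin K, ((K:ℝ)⁻¹) ^ 4 *
        (P (D (0, i4)) * Q (D (1, i3)) * P (D (2, i2)) * Q (D (3, i1))))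
      ∂(Measure.pi fun _ : Fin 4 × Fin K => γ)
      = (Fintype.card (Fin K) : ℝ) ^ 4 * (((K:ℝ)⁻¹) ^ 4 *
        ((∫ y, P y ∂γ) * (∫ y, Q y ∂γ) * (∫ y, P y ∂γ) * (∫ y, Q y ∂γ))) := Hquad.2
  have VAB : ∫ D : Fin 4 × Fin K → Fin d → ℝ,
      (∑ i1 : Fin K, ∑ i2 : Fin K, ((K:ℝ)⁻¹) ^ 2 * (P (D (0, i2)) * Q (D (1, i1))))
      ∂(Measure.pi fun _ : Fin 4 × Fin K => γ)
      = (Fintype.card (Fin K) : ℝ) ^ 2 * (((K:ℝ)⁻¹) ^ 2 *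
        ((∫ y, P y ∂γ) * (∫ y, Q y ∂γ))) := HAB.2
  have VCE : ∫ D : Fin 4 × Fin K → Fin d → ℝ,
      (∑ i1 : Fin K, ∑ i2 : Fin K, ((K:ℝ)⁻¹) ^ 2 * (P (D (2, i2)) * Q (D (3, i1))))
      ∂(Measure.pi fun _ : Fin 4 × Fin K => γ)
      = (Fintype.card (Fin K) : ℝ) ^ 2 * (((K:ℝ)⁻¹) ^ 2 *
        ((∫ y, P y ∂γ) * (∫ y, Q y ∂γ))) := HCE.2
  have I2 : Integrable (fun D : Fin 4 × Fin K → Fin d → ℝ =>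
      g * ∑ i1 : Fin K, ∑ i2 : Fin K, ((K:ℝ)⁻¹) ^ 2 * (P (D (0, i2)) * Q (D (1, i1))))
      (Measure.pi fun _ : Fin 4 × Fin K => γ) := IAB.const_mul g
  have I3 : Integrable (fun D : Fin 4 × Fin K → Fin d → ℝ =>
      g * ∑ i1 : Fin K, ∑ i2 : Fin K, ((K:ℝ)⁻¹) ^ 2 * (P (D (2, i2)) * Q (D (3, i1))))
      (Measure.pi fun _ : Fin 4 × Fin K => γ) := ICE.const_mul g
  have S1 : Integrable (fun D : Fin 4 × Fin K → Fin d → ℝ =>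
      (∑ i1 : Fin K, ∑ i2 : Fin K, ∑ i3 : Fin K, ∑ i4 : Fin K, ((K:ℝ)⁻¹) ^ 4 *
        (P (D (0, i4)) * Q (D (1, i3)) * P (D (2, i2)) * Q (D (3, i1))))
      - g * ∑ i1 : Fin K, ∑ i2 : Fin K, ((K:ℝ)⁻¹) ^ 2 * (P (D (0, i2)) * Q (D (1, i1))))
      (Measure.pi fun _ : Fin 4 × Fin K => γ) := I1.sub I2
  have S2 : Integrable (fun D : Fin 4 × Fin K → Fin d → ℝ =>
      (∑ i1 : Fin K, ∑ i2 : Fin K, ∑ i3 : Fin K, ∑ i4 : Fin K, ((K:ℝ)⁻¹) ^ 4 *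
        (P (D (0, i4)) * Q (D (1, i3)) * P (D (2, i2)) * Q (D (3, i1))))
      - g * (∑ i1 : Fin K, ∑ i2 : Fin K, ((K:ℝ)⁻¹) ^ 2 * (P (D (0, i2)) * Q (D (1, i1))))
      - g * (∑ i1 : Fin K, ∑ i2 : Fin K, ((K:ℝ)⁻¹) ^ 2 * (P (D (2, i2)) * Q (D (3, i1)))))
      (Measure.pi fun _ : Fin 4 × Fin K => γ) := S1.sub I3
  rw [integral_add S2 (integrable_const (g * g)),
    integral_sub S1 I3, integral_sub I1 I2, V1, integral_const_mul, VAB,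
    integral_const_mul, VCE, integral_const, hvq]
  simp only [measure_univ, probReal_univ, ENNReal.toReal_one, smul_eq_mul, one_mul, Fintype.card_fin]
  field_simp
  ring
end
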